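/- arXiv:1302.6096 — 8 statements merged into one kernel-verified Lean document; each statement's English description precedes it below -/
import Mathlib

section
/- Let n ≥ 1. The number of pairs (ε, π), with ε : Fin n → {±1} a sign vector and π a permutation of Fin n, such that for every i ∈ Fin n the product of ε over the π-orbit of i equals −1, is exactly (2n−1)!! = 1·3·5···(2n−1), the double factorial of 2n−1. -/
/-!
Write a permutation of `Fin (n + 1)` as `π = swap 0 p * ι σ` (`Equiv.Perm.decomposeFin`), where
`ι σ` fixes `0` and acts as `σ` on the successors. If `p = 0`, then `{0}` is a cycle of `π`, so
the sign at `0` must be `-1`. If `p = q + 1`, then `π` arises from `σ` by inserting `0` into the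
cycle of `q`; multiplying the sign at `q` by the sign `u` at `0` makes every cycle product of `π`
equal to the corresponding cycle product of `σ`. Hence the pairs with only negative cycles on
`n + 1` points correspond to triples `(u, p, w)` with `(u, p) ≠ (1, 0)` and `w` such a pair on
`n` points, and the count gets multiplied by `2 (n + 1) - 1 = 2 n + 1`.
-/

open Finset Nat

/-- The orbit (cycle) of `i` under the permutation `π`, as a finset. -/
def cycleOrbit {n : ℕ} (π : Equiv.Perm (Fin n)) (i : Fin n) : Finset (Fin n) :=
  Finset.univ.filter fun j => π.SameCycle i j

/-- `(ε, π)` has only negative cycles: the product of `ε` over every `π`-orbit is `-1`. -/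
def OnlyNegativeCycles {n : ℕ} (w : (Fin n → ℤˣ) × Equiv.Perm (Fin n)) : Prop :=
  ∀ i : Fin n, ∏ j ∈ cycleOrbit w.2 i, w.1 j = -1

open Equiv Equiv.Perm Function

namespace Equiv.Perm

section SameCycle

variable {α : Type*} [Finite α] {f g : Perm α} {x y : α}

theorem SameCycle.mem_of_mapsTo {s : Set α} (hs : Set.MapsTo f s s) (h : f.SameCycle x y)
    (hx : x ∈ s) : y ∈ s := by
  obtain ⟨m, rfl⟩ := h.exists_nat_pow_eq
  exact hs.perm_pow m hx

theorem sameCycle_iff_of_forall_sameCycle_apply_eq (h : ∀ y, f.SameCycle x y → g y = f y) :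
    g.SameCycle x y ↔ f.SameCycle x y := by
  have forward : ∀ {y}, g.SameCycle x y → f.SameCycle x y := fun hy =>
    hy.mem_of_mapsTo (s := {y | f.SameCycle x y})
      (fun z hz => by simpa [Set.mem_ofPred_eq, h z hz] using hz) SameCycle.rfl
  refine ⟨forward, fun hy => ?_⟩
  exact hy.mem_of_mapsTo (s := {y | g.SameCycle x y})
    (fun z hz => by simpa [Set.mem_ofPred_eq, ← h z (forward hz)] using hz) SameCycle.rfl

theorem sameCycle_iff_of_semiconj {β : Type*} [Finite β] {e : α → β} (he : Injective e)
    {g : Perm β} (h : Semiconj e f g) : g.SameCycle (e x) (e y) ↔ f.SameCycle x y := by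
  have hpow (m : ℕ) : (g ^ m) (e x) = e ((f ^ m) x) := by
    simp only [coe_pow, (h.iterate_right m).eq]
  constructor
  · intro hxy
    obtain ⟨m, hm⟩ := hxy.exists_nat_pow_eq
    rw [hpow] at hm
    exact he hm ▸ sameCycle_pow_right.mpr SameCycle.rfl
  · intro hxy
    obtain ⟨m, rfl⟩ := hxy.exists_nat_pow_eq
    exact hpow m ▸ sameCycle_pow_right.mpr SameCycle.rfl

variable [DecidableEq α] {a b : α}

theorem sameCycle_swap_mul_iff_of_apply_eq_self (ha : f a = a) (hab : a ≠ b) :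
    (swap a b * f).SameCycle a y ↔ y = a ∨ f.SameCycle b y := by
  have hfa {z : α} : f z = a ↔ z = a := by rw [← ha, f.injective.eq_iff, ha]
  constructor
  · intro hy
    refine hy.mem_of_mapsTo (s := {y | y = a ∨ f.SameCycle b y}) ?_ (Or.inl rfl)
    rintro z (rfl | hz)
    · simp [ha, SameCycle.rfl]
    · have hza : z ≠ a := by rintro rfl; exact hab (hz.eq_of_right ha).symm
      simp only [Set.mem_ofPred_eq, Perm.mul_apply, swap_apply_def, hfa, hza, if_false]
      split_ifs
      · exact Or.inl rfl
      · exact Or.inr (sameCycle_apply_right.mpr hz)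
  · have hb : (swap a b * f).SameCycle a b := ⟨1, by simp [ha]⟩
    rintro (rfl | hy)
    · exact SameCycle.rfl
    refine hy.mem_of_mapsTo (s := {y | (swap a b * f).SameCycle a y}) (fun z hz => ?_) hb
    have hfz : f z = swap a b ((swap a b * f) z) := by simp
    rw [Set.mem_ofPred_eq, hfz, swap_apply_def]
    split_ifs
    · exact hb
    · exact SameCycle.rfl
    · exact sameCycle_apply_right.mpr hz

theorem sameCycle_swap_mul_iff_of_not_sameCycle (ha : f a = a) (hxa : x ≠ a)
    (hbx : ¬ f.SameCycle b x) : (swap a b * f).SameCycle x y ↔ f.SameCycle x y := by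
  refine sameCycle_iff_of_forall_sameCycle_apply_eq fun z hz => ?_
  have hza : f z ≠ a := by
    rw [← ha, f.injective.ne_iff]; rintro rfl; exact hxa (hz.eq_of_right ha)
  have hzb : f z ≠ b := by
    rintro hzb; exact hbx (hzb ▸ sameCycle_apply_right.mpr hz).symm
  rw [Perm.mul_apply, swap_apply_of_ne_of_ne hza hzb]

end SameCycle

section DecomposeFin

variable {n : ℕ} (σ : Perm (Fin n))

theorem decomposeFin_symm_zero_semiconj : Semiconj Fin.succ σ (decomposeFin.symm (0, σ)) :=
  fun i => by simp [decomposeFin_symm_apply_succ]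

theorem decomposeFin_symm_eq_swap_mul (p : Fin (n + 1)) :
    decomposeFin.symm (p, σ) = swap 0 p * decomposeFin.symm (0, σ) := by
  ext i
  cases i using Fin.cases <;> simp [decomposeFin_symm_apply_succ]

theorem not_sameCycle_decomposeFin_symm_zero_zero_succ (j : Fin n) :
    ¬ (decomposeFin.symm (0, σ)).SameCycle 0 j.succ := fun h =>
  Fin.succ_ne_zero j (h.eq_of_left (decomposeFin_symm_apply_zero 0 σ)).symm

theorem sameCycle_decomposeFin_symm_succ_zero_succ (q j : Fin n) :
    (decomposeFin.symm (q.succ, σ)).SameCycle 0 j.succ ↔ σ.SameCycle q j := by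
  rw [decomposeFin_symm_eq_swap_mul, sameCycle_swap_mul_iff_of_apply_eq_self
    (decomposeFin_symm_apply_zero 0 σ) (Fin.succ_ne_zero q).symm,
    sameCycle_iff_of_semiconj (Fin.succ_injective n) (decomposeFin_symm_zero_semiconj σ)]
  simp [Fin.succ_ne_zero]

theorem sameCycle_decomposeFin_symm_succ_succ (p : Fin (n + 1)) (i j : Fin n) :
    (decomposeFin.symm (p, σ)).SameCycle i.succ j.succ ↔ σ.SameCycle i j := by
  have hι {x y : Fin n} :
      (decomposeFin.symm (0, σ)).SameCycle x.succ y.succ ↔ σ.SameCycle x y :=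
    sameCycle_iff_of_semiconj (Fin.succ_injective n) (decomposeFin_symm_zero_semiconj σ)
  cases p using Fin.cases with
  | zero => exact hι
  | succ q =>
    by_cases hqi : σ.SameCycle q i
    · have h0i := (sameCycle_decomposeFin_symm_succ_zero_succ σ q i).mpr hqi
      calc (decomposeFin.symm (q.succ, σ)).SameCycle i.succ j.succ
          ↔ (decomposeFin.symm (q.succ, σ)).SameCycle 0 j.succ := ⟨h0i.trans, h0i.symm.trans⟩
        _ ↔ σ.SameCycle q j := sameCycle_decomposeFin_symm_succ_zero_succ σ q j
        _ ↔ σ.SameCycle i j := ⟨hqi.symm.trans, hqi.trans⟩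
    · rw [decomposeFin_symm_eq_swap_mul, sameCycle_swap_mul_iff_of_not_sameCycle
        (decomposeFin_symm_apply_zero 0 σ) (Fin.succ_ne_zero i) (by rwa [hι]), hι]

end DecomposeFin

end Equiv.Perm

section CycleProducts

variable {n : ℕ}

theorem mem_cycleOrbit {π : Perm (Fin n)} {i j : Fin n} :
    j ∈ cycleOrbit π i ↔ π.SameCycle i j := by
  simp [cycleOrbit]

theorem prod_cycleOrbit_eq_mul_prod_succ (π : Perm (Fin (n + 1))) (η : Fin (n + 1) → ℤˣ)
    (i : Fin (n + 1)) :
    ∏ j ∈ cycleOrbit π i, η j = (if π.SameCycle i 0 then η 0 else 1) *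
      ∏ j : Fin n, if π.SameCycle i j.succ then η j.succ else 1 := by
  rw [cycleOrbit, prod_filter, Fin.prod_univ_succ]

theorem prod_cycleOrbit_decomposeFin_symm_succ (p : Fin (n + 1)) (σ : Perm (Fin n))
    (η : Fin (n + 1) → ℤˣ) (k : Fin n) :
    ∏ j ∈ cycleOrbit (decomposeFin.symm (p, σ)) k.succ, η j =
      (if (decomposeFin.symm (p, σ)).SameCycle 0 k.succ then η 0 else 1) *
        ∏ j ∈ cycleOrbit σ k, η j.succ := by
  rw [prod_cycleOrbit_eq_mul_prod_succ, cycleOrbit, prod_filter]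
  simp only [sameCycle_decomposeFin_symm_succ_succ, sameCycle_comm (x := k.succ) (y := 0)]

theorem prod_cycleOrbit_decomposeFin_symm_zero_zero (σ : Perm (Fin n))
    (η : Fin (n + 1) → ℤˣ) :
    ∏ j ∈ cycleOrbit (decomposeFin.symm (0, σ)) 0, η j = η 0 := by
  simp [prod_cycleOrbit_eq_mul_prod_succ, not_sameCycle_decomposeFin_symm_zero_zero_succ,
    SameCycle.rfl]

theorem prod_cycleOrbit_decomposeFin_symm_succ_zero (q : Fin n) (σ : Perm (Fin n))
    (η : Fin (n + 1) → ℤˣ) :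
    ∏ j ∈ cycleOrbit (decomposeFin.symm (q.succ, σ)) 0, η j =
      η 0 * ∏ j ∈ cycleOrbit σ q, η j.succ := by
  rw [prod_cycleOrbit_eq_mul_prod_succ, cycleOrbit, prod_filter]
  simp only [sameCycle_decomposeFin_symm_succ_zero_succ, SameCycle.rfl, if_true]

def mulAtPred (u : ℤˣ) (p : Fin (n + 1)) (ε : Fin n → ℤˣ) (j : Fin n) : ℤˣ :=
  (if j.succ = p then u else 1) * ε j

theorem mulAtPred_mulAtPred (u : ℤˣ) (p : Fin (n + 1)) (ε : Fin n → ℤˣ) :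
    mulAtPred u p (mulAtPred u p ε) = ε := by
  ext1 j
  by_cases h : j.succ = p <;> simp [mulAtPred, h, ← mul_assoc]

theorem mulAtPred_zero (u : ℤˣ) (ε : Fin n → ℤˣ) : mulAtPred u 0 ε = ε := by
  ext1 j
  simp [mulAtPred, Fin.succ_ne_zero]

theorem prod_mulAtPred_succ (u : ℤˣ) (q : Fin n) (ε : Fin n → ℤˣ) (s : Finset (Fin n)) :
    ∏ j ∈ s, mulAtPred u q.succ ε j = (if q ∈ s then u else 1) * ∏ j ∈ s, ε j := by
  simp only [mulAtPred, prod_mul_distrib, Fin.succ_inj, prod_ite_eq']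

end CycleProducts

section Counting

variable {n : ℕ}

theorem onlyNegativeCycles_cons_decomposeFin_symm_zero_iff (u : ℤˣ) (ε : Fin n → ℤˣ)
    (σ : Perm (Fin n)) :
    OnlyNegativeCycles (Fin.cons u ε, decomposeFin.symm (0, σ)) ↔
      u = -1 ∧ OnlyNegativeCycles (ε, σ) := by
  simp [OnlyNegativeCycles, Fin.forall_fin_succ, prod_cycleOrbit_decomposeFin_symm_zero_zero,
    prod_cycleOrbit_decomposeFin_symm_succ, not_sameCycle_decomposeFin_symm_zero_zero_succ]

theorem onlyNegativeCycles_cons_decomposeFin_symm_succ_iff (u : ℤˣ) (ε : Fin n → ℤˣ)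
    (σ : Perm (Fin n)) (q : Fin n) :
    OnlyNegativeCycles (Fin.cons u (mulAtPred u q.succ ε), decomposeFin.symm (q.succ, σ)) ↔
      OnlyNegativeCycles (ε, σ) := by
  simp only [OnlyNegativeCycles, Fin.forall_fin_succ, prod_cycleOrbit_decomposeFin_symm_succ_zero,
    prod_cycleOrbit_decomposeFin_symm_succ, sameCycle_decomposeFin_symm_succ_zero_succ,
    prod_mulAtPred_succ, Fin.cons_zero, Fin.cons_succ, mem_cycleOrbit, SameCycle.rfl, if_true,
    ← sameCycle_comm (x := q)]
  simp only [← mul_assoc, Int.units_mul_self, one_mul]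
  exact and_iff_right_of_imp fun h => h q

theorem onlyNegativeCycles_cons_mulAtPred_decomposeFin_symm_iff (u : ℤˣ) (p : Fin (n + 1))
    (ε : Fin n → ℤˣ) (σ : Perm (Fin n)) :
    OnlyNegativeCycles (Fin.cons u (mulAtPred u p ε), decomposeFin.symm (p, σ)) ↔
      (u, p) ≠ (1, 0) ∧ OnlyNegativeCycles (ε, σ) := by
  cases p using Fin.cases with
  | zero =>
    simp [mulAtPred_zero, onlyNegativeCycles_cons_decomposeFin_symm_zero_iff,
      Int.units_ne_iff_eq_neg]
  | succ q =>
    simp [onlyNegativeCycles_cons_decomposeFin_symm_succ_iff, Fin.succ_ne_zero]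

variable (n)

def consMulAtPredEquiv :
    (ℤˣ × Fin (n + 1)) × ((Fin n → ℤˣ) × Perm (Fin n)) ≃
      (Fin (n + 1) → ℤˣ) × Perm (Fin (n + 1)) where
  toFun x := (Fin.cons x.1.1 (mulAtPred x.1.1 x.1.2 x.2.1), decomposeFin.symm (x.1.2, x.2.2))
  invFun w := ((w.1 0, (decomposeFin w.2).1),
    (mulAtPred (w.1 0) (decomposeFin w.2).1 (Fin.tail w.1), (decomposeFin w.2).2))
  left_inv := by
    rintro ⟨⟨u, p⟩, ε, σ⟩
    simp [mulAtPred_mulAtPred]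
  right_inv := by
    rintro ⟨η, π⟩
    simp [mulAtPred_mulAtPred]

def onlyNegativeCyclesSuccEquiv :
    {w : (Fin (n + 1) → ℤˣ) × Perm (Fin (n + 1)) // OnlyNegativeCycles w} ≃
      {x : ℤˣ × Fin (n + 1) // x ≠ (1, 0)} ×
        {w : (Fin n → ℤˣ) × Perm (Fin n) // OnlyNegativeCycles w} :=
  ((consMulAtPredEquiv n).subtypeEquiv fun x =>
      (onlyNegativeCycles_cons_mulAtPred_decomposeFin_symm_iff x.1.1 x.1.2 x.2.1 x.2.2).symm).symm
    |>.trans (subtypeProdEquivProd (p := (· ≠ (1, 0))) (q := OnlyNegativeCycles))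

theorem card_onlyNegativeCycles_succ :
    Nat.card {w : (Fin (n + 1) → ℤˣ) × Perm (Fin (n + 1)) // OnlyNegativeCycles w} =
      (2 * n + 1) * Nat.card {w : (Fin n → ℤˣ) × Perm (Fin n) // OnlyNegativeCycles w} := by
  rw [Nat.card_congr (onlyNegativeCyclesSuccEquiv n), Nat.card_prod, Nat.card_eq_fintype_card,
    Fintype.card_subtype_compl, Fintype.card_prod, Fintype.card_units_int, Fintype.card_fin,
    Fintype.card_unique, show 2 * (n + 1) - 1 = 2 * n + 1 by omega]

end Counting

theorem card_onlyNegativeCycles_zero :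
    Nat.card {w : (Fin 0 → ℤˣ) × Perm (Fin 0) // OnlyNegativeCycles w} = 1 :=
  Nat.card_eq_one_iff_unique.mpr ⟨inferInstance, ⟨⟨(finZeroElim, 1), finZeroElim⟩⟩⟩

theorem stmt_1_general (n : ℕ) :
    Nat.card {w : (Fin n → ℤˣ) × Equiv.Perm (Fin n) // OnlyNegativeCycles w}
      = (2 * n - 1)‼ := by
  induction n with
  | zero => exact card_onlyNegativeCycles_zero
  | succ n ih =>
    rw [card_onlyNegativeCycles_succ, ih, show 2 * (n + 1) - 1 = 2 * n + 1 by omega,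
      Nat.doubleFactorial_add_one]

theorem stmt_1 (n : ℕ) (hn : 1 ≤ n) :
    Nat.card {w : (Fin n → ℤˣ) × Equiv.Perm (Fin n) // OnlyNegativeCycles w}
      = (2 * n - 1)‼ :=
  stmt_1_general n
end

section
/- Let n ≥ 1. The proportion p(n) of elements of W(B_n) having only negative cycles, i.e., the number of pairs (ε, π) with only negative cycles divided by 2^n · n!, equals (2n−1)!!/(2^n · n!) = (1·3·5···(2n−1))/(2·4·6···(2n)) as a rational number. -/
open Finset Nat

namespace NegHelper
open Equiv Equiv.Perm

variable {n : ℕ} (e : Equiv.Perm (Fin n)) (q : Fin n)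

lemma tau_zero : (decomposeFin.symm (q.succ, e) : Perm (Fin (n+1))) 0 = q.succ :=
  decomposeFin_symm_apply_zero _ _

lemma tau_succ (x : Fin n) : (decomposeFin.symm (q.succ, e) : Perm (Fin (n+1))) x.succ
    = if e x = q then 0 else (e x).succ := by
  rw [decomposeFin_symm_apply_succ]
  by_cases h : e x = q
  · simp [h]
  · rw [if_neg h, Equiv.swap_apply_of_ne_of_ne (Fin.succ_ne_zero _)
      (by simpa using h)]

lemma tau0_zero : (decomposeFin.symm ((0 : Fin (n+1)), e)) 0 = 0 :=
  decomposeFin_symm_apply_zero _ _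

lemma tau0_succ (x : Fin n) :
    (decomposeFin.symm ((0 : Fin (n+1)), e)) x.succ = (e x).succ := by
  rw [decomposeFin_symm_apply_succ]; simp

lemma sc_of_apply {m : ℕ} (f : Perm (Fin m)) (x : Fin m) : f.SameCycle x (f x) :=
  ⟨1, by simp⟩

lemma sc_of_nat_pow {m : ℕ} (f : Perm (Fin m)) (x : Fin m) (k : ℕ) :
    f.SameCycle x ((f ^ k) x) := ⟨k, by simp⟩

-- step lemma
lemma step1 (j : Fin n) :
    Perm.SameCycle (decomposeFin.symm (q.succ, e)) j.succ (e j).succ := by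
  by_cases h : e j = q
  · subst h
    have h1 : Perm.SameCycle (decomposeFin.symm ((e j).succ, e)) j.succ 0 := by
      have := sc_of_apply (decomposeFin.symm ((e j).succ, e)) j.succ
      rwa [tau_succ, if_pos rfl] at this
    have h2 : Perm.SameCycle (decomposeFin.symm ((e j).succ, e)) 0 (e j).succ := by
      have := sc_of_apply (decomposeFin.symm ((e j).succ, e)) 0
      rwa [tau_zero] at this
    exact h1.trans h2
  · have := sc_of_apply (decomposeFin.symm (q.succ, e)) j.succ
    rwa [tau_succ, if_neg h] at this

lemma sc_succ_pow (k : ℕ) : ∀ i : Fin n,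
    Perm.SameCycle (decomposeFin.symm (q.succ, e)) i.succ ((e ^ k) i).succ := by
  induction k with
  | zero => intro i; simpa using Perm.SameCycle.refl _ _
  | succ k ih =>
    intro i
    rw [pow_succ, Perm.mul_apply]
    exact (step1 e q i).trans (ih (e i))

lemma sc_succ_of_sc {i j : Fin n} (h : e.SameCycle i j) :
    Perm.SameCycle (decomposeFin.symm (q.succ, e)) i.succ j.succ := by
  obtain ⟨k, -, rfl⟩ := h.exists_pow_eq'
  exact sc_succ_pow e q k i

-- reverse direction
lemma rev (k : ℕ) :
    (∀ i j : Fin n, ((decomposeFin.symm (q.succ, e) : Perm (Fin (n+1))) ^ k) i.succ = j.succ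
        → e.SameCycle i j) ∧
    (∀ j : Fin n, ((decomposeFin.symm (q.succ, e) : Perm (Fin (n+1))) ^ k) 0 = j.succ
        → e.SameCycle q j) := by
  induction k with
  | zero =>
    constructor
    · intro i j h; simp at h; exact h ▸ Perm.SameCycle.refl _ _
    · intro j h; simp at h; exact absurd h.symm (Fin.succ_ne_zero j)
  | succ k ih =>
    constructor
    · intro i j h
      rw [pow_succ, Perm.mul_apply] at h
      by_cases hq : e i = q
      · rw [tau_succ, if_pos hq] at h
        have := ih.2 j h
        exact (hq ▸ sc_of_apply e i).trans this
      · rw [tau_succ, if_neg hq] at h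
        exact (sc_of_apply e i).trans (ih.1 _ _ h)
    · intro j h
      rw [pow_succ, Perm.mul_apply, tau_zero] at h
      exact ih.1 _ _ h

lemma sc_succ_iff (i j : Fin n) :
    Perm.SameCycle (decomposeFin.symm (q.succ, e)) i.succ j.succ ↔ e.SameCycle i j := by
  constructor
  · intro h
    obtain ⟨k, -, hk⟩ := h.exists_pow_eq'
    exact (rev e q k).1 i j hk
  · exact sc_succ_of_sc e q

lemma sc_zero_iff (j : Fin n) :
    Perm.SameCycle (decomposeFin.symm (q.succ, e)) 0 j.succ ↔ e.SameCycle q j := by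
  constructor
  · intro h
    obtain ⟨k, -, hk⟩ := h.exists_pow_eq'
    exact (rev e q k).2 j hk
  · intro h
    have h1 : Perm.SameCycle (decomposeFin.symm (q.succ, e)) 0 q.succ := by
      have := sc_of_apply (decomposeFin.symm (q.succ, e)) 0
      rwa [tau_zero] at this
    exact h1.trans (sc_succ_of_sc e q h)

-- tau0 versions
lemma tau0_pow (k : ℕ) (x : Fin n) :
    ((decomposeFin.symm ((0 : Fin (n+1)), e) : Perm (Fin (n+1))) ^ k) x.succ
      = ((e ^ k) x).succ := by
  induction k generalizing x with
  | zero => simp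
  | succ k ih =>
    rw [pow_succ, Perm.mul_apply, tau0_succ, ih, pow_succ, Perm.mul_apply]

lemma tau0_pow_zero (k : ℕ) :
    ((decomposeFin.symm ((0 : Fin (n+1)), e) : Perm (Fin (n+1))) ^ k) 0 = 0 := by
  induction k with
  | zero => simp
  | succ k ih => rw [pow_succ, Perm.mul_apply, tau0_zero, ih]

lemma sc0_succ_iff (i j : Fin n) :
    Perm.SameCycle (decomposeFin.symm ((0 : Fin (n+1)), e)) i.succ j.succ ↔ e.SameCycle i j := by
  constructor
  · intro h
    obtain ⟨k, -, hk⟩ := h.exists_pow_eq'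
    rw [tau0_pow] at hk
    exact ⟨k, by simpa using Fin.succ_injective _ hk⟩
  · intro h
    obtain ⟨k, -, rfl⟩ := h.exists_pow_eq'
    exact ⟨k, by rw [zpow_natCast, tau0_pow]⟩

lemma sc0_zero_iff (x : Fin (n+1)) :
    Perm.SameCycle (decomposeFin.symm ((0 : Fin (n+1)), e)) 0 x ↔ x = 0 := by
  constructor
  · intro h
    obtain ⟨k, -, hk⟩ := h.exists_pow_eq'
    rw [tau0_pow_zero] at hk; exact hk.symm
  · rintro rfl; exact Perm.SameCycle.refl _ _


-- orbit lemmas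
lemma cycleOrbit_mem {m : ℕ} (f : Perm (Fin m)) (i x : Fin m) :
    x ∈ cycleOrbit f i ↔ f.SameCycle i x := by
  simp [cycleOrbit]

lemma cycleOrbit_congr {m : ℕ} {f : Perm (Fin m)} {i j : Fin m} (h : f.SameCycle i j) :
    cycleOrbit f i = cycleOrbit f j := by
  ext x
  simp only [cycleOrbit_mem]
  exact ⟨fun hx => h.symm.trans hx, fun hx => h.trans hx⟩

lemma orbit0_zero : cycleOrbit (decomposeFin.symm ((0 : Fin (n+1)), e)) 0 = {0} := by
  ext x
  simp only [cycleOrbit_mem, Finset.mem_singleton, sc0_zero_iff]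

lemma orbit0_succ (j : Fin n) :
    cycleOrbit (decomposeFin.symm ((0 : Fin (n+1)), e)) j.succ
      = (cycleOrbit e j).image Fin.succ := by
  ext x
  induction x using Fin.cases with
  | zero =>
    simp only [cycleOrbit_mem, Finset.mem_image]
    constructor
    · intro h
      exact absurd ((sc0_zero_iff e _).1 h.symm) (Fin.succ_ne_zero j)
    · rintro ⟨a, -, ha⟩; exact absurd ha (Fin.succ_ne_zero a)
  | succ m =>
    simp only [cycleOrbit_mem, Finset.mem_image, sc0_succ_iff]
    constructor
    · intro h; exact ⟨m, h, rfl⟩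
    · rintro ⟨a, ha, h⟩
      rw [← Fin.succ_injective _ h]
      exact ha

lemma orbit_zero : cycleOrbit (decomposeFin.symm (q.succ, e)) 0
    = insert 0 ((cycleOrbit e q).image Fin.succ) := by
  ext x
  induction x using Fin.cases with
  | zero =>
    simp only [cycleOrbit_mem, Finset.mem_insert]
    exact iff_of_true (Perm.SameCycle.refl _ _) (by simp)
  | succ m =>
    simp only [cycleOrbit_mem, Finset.mem_insert, Finset.mem_image, sc_zero_iff]
    constructor
    · intro h; exact Or.inr ⟨m, h, rfl⟩
    · rintro (h | ⟨a, ha, h⟩)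
      · exact absurd h (Fin.succ_ne_zero m)
      · rw [← Fin.succ_injective _ h]
        exact ha

lemma orbit_succ_of_not {i : Fin n} (hi : ¬ e.SameCycle q i) :
    cycleOrbit (decomposeFin.symm (q.succ, e)) i.succ = (cycleOrbit e i).image Fin.succ := by
  ext x
  induction x using Fin.cases with
  | zero =>
    simp only [cycleOrbit_mem, Finset.mem_image]
    constructor
    · intro h
      exact absurd ((sc_zero_iff e q i).1 h.symm) hi
    · rintro ⟨a, -, ha⟩; exact absurd ha (Fin.succ_ne_zero a)
  | succ m =>
    simp only [cycleOrbit_mem, Finset.mem_image, sc_succ_iff]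
    constructor
    · intro h; exact ⟨m, h, rfl⟩
    · rintro ⟨a, ha, h⟩
      rw [← Fin.succ_injective _ h]
      exact ha

lemma orbit_succ_of_sc {i : Fin n} (hi : e.SameCycle q i) :
    cycleOrbit (decomposeFin.symm (q.succ, e)) i.succ
      = cycleOrbit (decomposeFin.symm (q.succ, e)) 0 := by
  exact (cycleOrbit_congr ((sc_zero_iff e q i).2 hi)).symm

-- product lemmas
lemma prod_image_succ (S : Finset (Fin n)) (ε : Fin (n+1) → ℤˣ) :
    ∏ j ∈ S.image Fin.succ, ε j = ∏ j ∈ S, ε j.succ :=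
  Finset.prod_image (fun a _ b _ h => Fin.succ_injective _ h)

lemma prod_insert_zero (S : Finset (Fin n)) (ε : Fin (n+1) → ℤˣ) :
    ∏ j ∈ insert 0 (S.image Fin.succ), ε j = ε 0 * ∏ j ∈ S, ε j.succ := by
  rw [Finset.prod_insert, prod_image_succ]
  simp only [Finset.mem_image]
  rintro ⟨a, -, ha⟩
  exact Fin.succ_ne_zero a ha


lemma q_mem_orbit : q ∈ cycleOrbit e q := (cycleOrbit_mem e q q).2 (Perm.SameCycle.refl _ _)

lemma prod_twist {S : Finset (Fin n)} (hq : q ∈ S) (ε : Fin n → ℤˣ) (u : ℤˣ) :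
    ∏ j ∈ S, (if j = q then u * ε j else ε j) = u * ∏ j ∈ S, ε j := by
  rw [← Finset.mul_prod_erase S _ hq, ← Finset.mul_prod_erase S ε hq, if_pos rfl,
    Finset.prod_congr rfl (fun x hx => if_neg (Finset.ne_of_mem_erase hx)), mul_assoc]

lemma onc_none {ε : Fin n → ℤˣ} (h : OnlyNegativeCycles (ε, e)) :
    OnlyNegativeCycles (Fin.cases (-1) ε, decomposeFin.symm ((0 : Fin (n+1)), e)) := by
  intro i
  induction i using Fin.cases with
  | zero => rw [orbit0_zero, Finset.prod_singleton]; rfl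
  | succ j =>
    rw [orbit0_succ, prod_image_succ]
    simp only [Fin.cases_succ]
    exact h j

lemma onc_some {ε : Fin n → ℤˣ} (u : ℤˣ) (h : OnlyNegativeCycles (ε, e)) :
    OnlyNegativeCycles (Fin.cases u (fun j => if j = q then u * ε j else ε j),
      decomposeFin.symm (q.succ, e)) := by
  have h0 : ∏ j ∈ cycleOrbit (decomposeFin.symm (q.succ, e)) 0,
      (Fin.cases u (fun j => if j = q then u * ε j else ε j) : Fin (n+1) → ℤˣ) j = -1 := by
    rw [orbit_zero, prod_insert_zero]
    simp only [Fin.cases_zero, Fin.cases_succ]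
    rw [prod_twist q (q_mem_orbit e q) ε u, h q, ← mul_assoc, Int.units_mul_self, one_mul]
  intro i
  induction i using Fin.cases with
  | zero => exact h0
  | succ j =>
    by_cases hsc : e.SameCycle q j
    · rw [orbit_succ_of_sc e q hsc]; exact h0
    · rw [orbit_succ_of_not e q hsc, prod_image_succ]
      simp only [Fin.cases_succ]
      have : ∀ x ∈ cycleOrbit e j, (if x = q then u * ε x else ε x) = ε x := by
        intro x hx
        rw [if_neg]
        rintro rfl
        exact hsc ((cycleOrbit_mem e j x).1 hx).symm
      rw [Finset.prod_congr rfl this]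
      exact h j

lemma onc_fwd_none {ε : Fin (n+1) → ℤˣ}
    (h : OnlyNegativeCycles (ε, decomposeFin.symm ((0 : Fin (n+1)), e))) :
    OnlyNegativeCycles (ε ∘ Fin.succ, e) := by
  intro i
  have := h i.succ
  rwa [orbit0_succ, prod_image_succ] at this

lemma onc_fwd_some {ε : Fin (n+1) → ℤˣ}
    (h : OnlyNegativeCycles (ε, decomposeFin.symm (q.succ, e))) :
    OnlyNegativeCycles ((fun j => if j = q then ε 0 * ε j.succ else ε j.succ), e) := by
  have h0 := h 0
  rw [orbit_zero, prod_insert_zero] at h0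
  intro i
  by_cases hsc : e.SameCycle q i
  · show ∏ j ∈ cycleOrbit e i, (if j = q then ε 0 * ε j.succ else ε j.succ) = -1
    rw [cycleOrbit_congr hsc.symm,
      prod_twist q (q_mem_orbit e q) (fun j => ε j.succ) (ε 0)]
    exact h0
  · show ∏ j ∈ cycleOrbit e i, (if j = q then ε 0 * ε j.succ else ε j.succ) = -1
    have hc : ∀ x ∈ cycleOrbit e i, (if x = q then ε 0 * ε x.succ else ε x.succ) = ε x.succ := by
      intro x hx
      rw [if_neg]
      rintro rfl
      exact hsc ((cycleOrbit_mem e i x).1 hx).symm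
    rw [Finset.prod_congr rfl hc, ← prod_image_succ, ← orbit_succ_of_not e q hsc]
    exact h i.succ

end NegHelper

open NegHelper Equiv Equiv.Perm

def NS (m : ℕ) := {w : (Fin m → ℤˣ) × Equiv.Perm (Fin m) // OnlyNegativeCycles w}

def F {n : ℕ} (x : Option (Fin n × ℤˣ) × NS n) : NS (n+1) :=
  match x with
  | (none, ⟨(ε, e), h⟩) => ⟨(Fin.cases (-1) ε, decomposeFin.symm (0, e)), onc_none e h⟩
  | (some (q, u), ⟨(ε, e), h⟩) =>
      ⟨(Fin.cases u fun j => if j = q then u * ε j else ε j,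
        decomposeFin.symm (q.succ, e)), onc_some e q u h⟩

lemma F_inj {n : ℕ} : Function.Injective (F (n := n)) := by
  rintro ⟨o₁, ⟨⟨ε₁, e₁⟩, h₁⟩⟩ ⟨o₂, ⟨⟨ε₂, e₂⟩, h₂⟩⟩ hF
  have hv := Subtype.ext_iff.1 hF
  rcases o₁ with _ | ⟨q₁, u₁⟩ <;> rcases o₂ with _ | ⟨q₂, u₂⟩ <;>
      simp only [F, Prod.mk.injEq] at hv <;> obtain ⟨hε, hτ⟩ := hv <;>
      have hpe := decomposeFin.symm.injective hτ <;>
      rw [Prod.mk.injEq] at hpe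
  · obtain ⟨-, rfl⟩ := hpe
    have hε' : ε₁ = ε₂ := by
      funext j
      have := congrFun hε j.succ
      simpa using this
    subst hε'
    rfl
  · exact absurd hpe.1 (Fin.succ_ne_zero q₂).symm
  · exact absurd hpe.1 (Fin.succ_ne_zero q₁)
  · obtain ⟨hq, rfl⟩ := hpe
    have hq' : q₁ = q₂ := Fin.succ_injective _ hq
    subst hq'
    have hu : u₁ = u₂ := by simpa using congrFun hε 0
    subst hu
    have hε' : ε₁ = ε₂ := by
      funext j
      have hj := congrFun hε j.succ
      simp only [Fin.cases_succ] at hj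
      by_cases hjq : j = q₁
      · rw [if_pos hjq, if_pos hjq] at hj
        exact mul_left_cancel hj
      · rwa [if_neg hjq, if_neg hjq] at hj
    subst hε'
    rfl

lemma F_surj {n : ℕ} : Function.Surjective (F (n := n)) := by
  rintro ⟨⟨ε, τ⟩, h⟩
  set p := (decomposeFin τ).1 with hp
  set e := (decomposeFin τ).2 with he
  have hτ : decomposeFin.symm (p, e) = τ := by
    rw [hp, he]
    exact Equiv.symm_apply_apply _ _
  clear_value p e
  clear hp he
  induction p using Fin.cases with
  | zero =>
    refine ⟨(none, ⟨(ε ∘ Fin.succ, e), onc_fwd_none e ?_⟩), ?_⟩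
    · rw [hτ]; exact h
    · apply Subtype.ext
      simp only [F]
      rw [Prod.mk.injEq]
      refine ⟨?_, hτ⟩
      have hε0 : ε 0 = -1 := by
        have h0 := h 0
        rw [← hτ, orbit0_zero, Finset.prod_singleton] at h0
        exact h0
      funext i
      induction i using Fin.cases with
      | zero => simpa using hε0.symm
      | succ j => simp
  | succ q =>
    refine ⟨(some (q, ε 0), ⟨(fun j => if j = q then ε 0 * ε j.succ else ε j.succ, e),
        onc_fwd_some e q ?_⟩), ?_⟩
    · rw [hτ]; exact h
    · apply Subtype.ext
      simp only [F]
      rw [Prod.mk.injEq]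
      refine ⟨?_, hτ⟩
      funext i
      induction i using Fin.cases with
      | zero => simp
      | succ j =>
        simp only [Fin.cases_succ]
        by_cases hjq : j = q
        · subst hjq
          rw [if_pos rfl, if_pos rfl, ← mul_assoc, Int.units_mul_self, one_mul]
        · rw [if_neg hjq, if_neg hjq]

lemma card_NS_succ (n : ℕ) : Nat.card (NS (n+1)) = (2 * n + 1) * Nat.card (NS n) := by
  rw [← Nat.card_eq_of_bijective F ⟨F_inj, F_surj⟩, Nat.card_prod]
  congr 1
  rw [Nat.card_eq_fintype_card]
  simp [mul_comm]

lemma card_NS_zero : Nat.card (NS 0) = 1 := by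
  have hall : ∀ w : (Fin 0 → ℤˣ) × Equiv.Perm (Fin 0), OnlyNegativeCycles w :=
    fun w i => i.elim0
  rw [show NS 0 = {w : (Fin 0 → ℤˣ) × Equiv.Perm (Fin 0) // OnlyNegativeCycles w} from rfl,
    Nat.card_congr (Equiv.subtypeUnivEquiv hall), Nat.card_prod]
  simp [Nat.card_eq_fintype_card]

lemma card_NS (n : ℕ) : Nat.card (NS n) = (2 * n - 1)‼ := by
  induction n with
  | zero => simpa using card_NS_zero
  | succ n ih =>
    rw [card_NS_succ, ih]
    cases n with
    | zero => rfl
    | succ m =>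
      have h1 : 2 * (m + 1) - 1 = 2 * m + 1 := by omega
      have h2 : 2 * (m + 1 + 1) - 1 = 2 * m + 1 + 2 := by omega
      have h3 : 2 * (m + 1) + 1 = 2 * m + 1 + 2 := by omega
      rw [h1, h2, h3, Nat.doubleFactorial_add_two]

theorem stmt_2 (n : ℕ) (hn : 1 ≤ n) :
    (Nat.card {w : (Fin n → ℤˣ) × Equiv.Perm (Fin n) // OnlyNegativeCycles w} : ℚ)
        / (2 ^ n * n.factorial)
      = ((2 * n - 1)‼ : ℚ) / (2 ^ n * n.factorial) ∧
    (Nat.card {w : (Fin n → ℤˣ) × Equiv.Perm (Fin n) // OnlyNegativeCycles w} : ℚ)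
        / (2 ^ n * n.factorial)
      = ((2 * n - 1)‼ : ℚ) / ((2 * n)‼ : ℚ) := by
  have hcard : Nat.card {w : (Fin n → ℤˣ) × Equiv.Perm (Fin n) // OnlyNegativeCycles w}
      = (2 * n - 1)‼ := card_NS n
  constructor
  · rw [hcard]
  · rw [hcard, Nat.doubleFactorial_two_mul]
    push_cast
    ring
end

section
/- Let n ≥ 1. The number of pairs (ε, π), with ε : Fin n → {±1} and π a permutation of Fin n, such that for every i the product of ε over the π-orbit of i equals −1 and additionally the product of all values ε i over i ∈ Fin n equals +1 (equivalently, the number of cycles of π is even), is (n−1)·(2n−3)!!. -/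
open Finset Nat

namespace S3

open Equiv Equiv.Perm

variable {n : ℕ}

lemma sc_of_pow (f : Perm (Fin n)) {x y : Fin n} (m : ℕ) (h : (f ^ m) x = y) :
    f.SameCycle x y := ⟨(m : ℤ), by simpa [zpow_natCast] using h⟩

lemma mem_cycleOrbit {π : Perm (Fin n)} {i j : Fin n} :
    j ∈ cycleOrbit π i ↔ π.SameCycle i j := by simp [cycleOrbit]

lemma cycleOrbit_eq_of_sameCycle {π : Perm (Fin n)} {i j : Fin n} (h : π.SameCycle i j) :
    cycleOrbit π i = cycleOrbit π j := by
  ext x; simp only [mem_cycleOrbit]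
  exact ⟨fun hx => h.symm.trans hx, fun hx => h.trans hx⟩

/-! ### the fixed-point extension -/

def fx (e : Perm (Fin n)) : Perm (Fin (n+1)) := Equiv.Perm.decomposeFin.symm (0, e)

lemma fx_zero (e : Perm (Fin n)) : fx e 0 = 0 := Equiv.Perm.decomposeFin_symm_apply_zero 0 e

lemma fx_succ (e : Perm (Fin n)) (i : Fin n) : fx e i.succ = (e i).succ := by
  rw [fx, Equiv.Perm.decomposeFin_symm_apply_succ]
  exact Equiv.swap_apply_of_ne_of_ne (Fin.succ_ne_zero _) (Fin.succ_ne_zero _)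

lemma fx_pow_zero (e : Perm (Fin n)) (m : ℕ) : ((fx e) ^ m) 0 = 0 := by
  induction m with
  | zero => rfl
  | succ m ih => rw [_root_.pow_succ', Equiv.Perm.mul_apply, ih, fx_zero]

lemma fx_pow_succ (e : Perm (Fin n)) (m : ℕ) (i : Fin n) :
    ((fx e) ^ m) i.succ = ((e ^ m) i).succ := by
  induction m with
  | zero => rfl
  | succ m ih =>
    rw [_root_.pow_succ', _root_.pow_succ', Equiv.Perm.mul_apply, Equiv.Perm.mul_apply, ih, fx_succ]

lemma sameCycle_fx_zero {e : Perm (Fin n)} {x : Fin (n+1)} :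
    (fx e).SameCycle 0 x ↔ x = 0 := by
  constructor
  · intro h
    obtain ⟨m, -, hm⟩ := h.exists_pow_eq'
    rw [fx_pow_zero] at hm; exact hm.symm
  · rintro rfl; exact Equiv.Perm.SameCycle.refl _ _

lemma sameCycle_fx_succ {e : Perm (Fin n)} {i j : Fin n} :
    (fx e).SameCycle i.succ j.succ ↔ e.SameCycle i j := by
  constructor
  · intro h
    obtain ⟨m, -, hm⟩ := h.exists_pow_eq'
    rw [fx_pow_succ] at hm
    exact sc_of_pow e m (Fin.succ_injective n hm)
  · intro h
    obtain ⟨m, -, hm⟩ := h.exists_pow_eq'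
    exact sc_of_pow (fx e) m (by rw [fx_pow_succ, hm])

lemma cycleOrbit_fx_zero (e : Perm (Fin n)) : cycleOrbit (fx e) 0 = {0} := by
  ext x; simp [mem_cycleOrbit, sameCycle_fx_zero]

lemma cycleOrbit_fx_succ (e : Perm (Fin n)) (i : Fin n) :
    cycleOrbit (fx e) i.succ = (cycleOrbit e i).map ⟨Fin.succ, Fin.succ_injective n⟩ := by
  ext x
  refine Fin.cases ?_ (fun j => ?_) x
  · simp only [mem_cycleOrbit, Finset.mem_map]
    constructor
    · intro h; exact absurd (sameCycle_fx_zero.mp h.symm) (Fin.succ_ne_zero i)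
    · rintro ⟨a, -, ha⟩; exact absurd ha (Fin.succ_ne_zero a)
  · simp only [mem_cycleOrbit, Finset.mem_map, Function.Embedding.coeFn_mk]
    rw [sameCycle_fx_succ]
    constructor
    · intro h; exact ⟨j, h, rfl⟩
    · rintro ⟨a, ha, ha'⟩
      rw [← Fin.succ_injective n ha']; exact ha

/-! ### the insertion extension -/

def ins (k : Fin n) (e : Perm (Fin n)) : Perm (Fin (n+1)) :=
  Equiv.Perm.decomposeFin.symm (k.succ, e)

lemma ins_zero (k : Fin n) (e : Perm (Fin n)) : ins k e 0 = k.succ :=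
  Equiv.Perm.decomposeFin_symm_apply_zero _ e

lemma ins_succ (k : Fin n) (e : Perm (Fin n)) (i : Fin n) :
    ins k e i.succ = if e i = k then 0 else (e i).succ := by
  rw [ins, Equiv.Perm.decomposeFin_symm_apply_succ]
  rcases eq_or_ne (e i) k with h | h
  · rw [h, if_pos rfl, Equiv.swap_apply_right]
  · rw [if_neg h]
    exact Equiv.swap_apply_of_ne_of_ne (Fin.succ_ne_zero _)
      (fun hc => h (Fin.succ_injective n hc))

lemma ins_pow_succ (k : Fin n) (e : Perm (Fin n)) (m : ℕ) (i : Fin n) :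
    (((ins k e) ^ m) i.succ = 0 ∧ e.SameCycle i k) ∨
      ∃ j, ((ins k e) ^ m) i.succ = j.succ ∧ e.SameCycle i j := by
  induction m with
  | zero => exact Or.inr ⟨i, rfl, Equiv.Perm.SameCycle.refl _ _⟩
  | succ m ih =>
    rw [_root_.pow_succ', Equiv.Perm.mul_apply]
    rcases ih with ⟨h0, hk⟩ | ⟨j, hj, hij⟩
    · rw [h0, ins_zero]
      exact Or.inr ⟨k, rfl, hk⟩
    · rw [hj, ins_succ]
      by_cases h : e j = k
      · refine Or.inl ⟨if_pos h, hij.trans ?_⟩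
        exact sc_of_pow e 1 (by simpa using h)
      · exact Or.inr ⟨e j, if_neg h, hij.trans (sc_of_pow e 1 (by simp))⟩


lemma sc_ins_succ_zero {k i : Fin n} {e : Perm (Fin n)}
    (h : (ins k e).SameCycle i.succ 0) : e.SameCycle i k := by
  obtain ⟨m, -, hm⟩ := h.exists_pow_eq'
  rcases ins_pow_succ k e m i with ⟨-, hk⟩ | ⟨j, hj, -⟩
  · exact hk
  · rw [hm] at hj; exact absurd hj.symm (Fin.succ_ne_zero j)

lemma sc_ins_succ_succ_mp {k i j : Fin n} {e : Perm (Fin n)}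
    (h : (ins k e).SameCycle i.succ j.succ) : e.SameCycle i j := by
  obtain ⟨m, -, hm⟩ := h.exists_pow_eq'
  rcases ins_pow_succ k e m i with ⟨h0, -⟩ | ⟨j', hj', hij'⟩
  · rw [hm] at h0; exact absurd h0 (Fin.succ_ne_zero j)
  · rw [hm] at hj'
    rwa [← Fin.succ_injective n hj'] at hij'

lemma sc_ins_zero_succ_mp {k j : Fin n} {e : Perm (Fin n)}
    (h : (ins k e).SameCycle 0 j.succ) : e.SameCycle k j := by
  obtain ⟨m, -, hm⟩ := h.exists_pow_eq'
  rcases m with - | m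
  · exact absurd hm.symm (Fin.succ_ne_zero j)
  · rw [pow_succ, Equiv.Perm.mul_apply, ins_zero] at hm
    rcases ins_pow_succ k e m k with ⟨h0, -⟩ | ⟨j', hj', hkj'⟩
    · rw [hm] at h0; exact absurd h0 (Fin.succ_ne_zero j)
    · rw [hm] at hj'
      rwa [← Fin.succ_injective n hj'] at hkj'

lemma sc_ins_step (k : Fin n) (e : Perm (Fin n)) (j : Fin n) :
    (ins k e).SameCycle j.succ ((e j).succ) := by
  by_cases h : e j = k
  · refine sc_of_pow _ 2 ?_
    rw [pow_two, Equiv.Perm.mul_apply, ins_succ, if_pos h, ins_zero, h]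
  · exact sc_of_pow _ 1 (by rw [pow_one, ins_succ, if_neg h])

lemma sc_ins_succ_pow (k : Fin n) (e : Perm (Fin n)) (m : ℕ) (i : Fin n) :
    (ins k e).SameCycle i.succ (((e ^ m) i).succ) := by
  induction m with
  | zero => exact Equiv.Perm.SameCycle.refl _ _
  | succ m ih =>
    rw [_root_.pow_succ', Equiv.Perm.mul_apply]
    exact ih.trans (sc_ins_step k e _)

lemma sc_ins_succ_succ {k i j : Fin n} {e : Perm (Fin n)} :
    (ins k e).SameCycle i.succ j.succ ↔ e.SameCycle i j := by
  refine ⟨sc_ins_succ_succ_mp, fun h => ?_⟩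
  obtain ⟨m, -, hm⟩ := h.exists_pow_eq'
  rw [← hm]; exact sc_ins_succ_pow k e m i

lemma sc_ins_zero_succ {k j : Fin n} {e : Perm (Fin n)} :
    (ins k e).SameCycle 0 j.succ ↔ e.SameCycle k j := by
  refine ⟨sc_ins_zero_succ_mp, fun h => ?_⟩
  have h1 : (ins k e).SameCycle 0 k.succ := sc_of_pow _ 1 (by rw [pow_one, ins_zero])
  exact h1.trans (sc_ins_succ_succ.mpr h)

lemma cycleOrbit_ins_zero (k : Fin n) (e : Perm (Fin n)) :
    cycleOrbit (ins k e) 0 =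
      insert 0 ((cycleOrbit e k).map ⟨Fin.succ, Fin.succ_injective n⟩) := by
  ext x
  refine Fin.cases ?_ (fun j => ?_) x
  · simp [mem_cycleOrbit, Equiv.Perm.SameCycle.refl]
  · simp only [mem_cycleOrbit, Finset.mem_insert, Finset.mem_map,
      Function.Embedding.coeFn_mk, sc_ins_zero_succ]
    constructor
    · intro h; exact Or.inr ⟨j, h, rfl⟩
    · rintro (h | ⟨a, ha, ha'⟩)
      · exact absurd h (Fin.succ_ne_zero j)
      · rw [← Fin.succ_injective n ha']; exact ha

lemma cycleOrbit_ins_succ {k : Fin n} {e : Perm (Fin n)} {i : Fin n}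
    (h : ¬ e.SameCycle i k) :
    cycleOrbit (ins k e) i.succ = (cycleOrbit e i).map ⟨Fin.succ, Fin.succ_injective n⟩ := by
  ext x
  refine Fin.cases ?_ (fun j => ?_) x
  · simp only [mem_cycleOrbit, Finset.mem_map]
    constructor
    · intro hx; exact absurd (sc_ins_succ_zero hx) h
    · rintro ⟨a, -, ha⟩; exact absurd ha (Fin.succ_ne_zero a)
  · simp only [mem_cycleOrbit, Finset.mem_map, Function.Embedding.coeFn_mk, sc_ins_succ_succ]
    constructor
    · intro hx; exact ⟨j, hx, rfl⟩
    · rintro ⟨a, ha, ha'⟩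
      rw [← Fin.succ_injective n ha']; exact ha


/-! ### products and OnlyNegativeCycles transport -/

lemma prod_map_succ (s : Finset (Fin n)) (eps : Fin (n+1) → ℤˣ) :
    ∏ x ∈ s.map ⟨Fin.succ, Fin.succ_injective n⟩, eps x = ∏ j ∈ s, eps j.succ :=
  Finset.prod_map s _ eps

lemma prod_eps' (eps : Fin (n+1) → ℤˣ) (k : Fin n) (e : Perm (Fin n)) (i : Fin n) :
    ∏ j ∈ cycleOrbit e i, (eps j.succ * if j = k then eps 0 else 1) =
      (if e.SameCycle i k then eps 0 else 1) * ∏ j ∈ cycleOrbit e i, eps j.succ := by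
  rw [Finset.prod_mul_distrib, Finset.prod_ite_eq' (cycleOrbit e i) k (fun _ => eps 0),
    mul_comm]
  simp only [mem_cycleOrbit]

lemma ON_fx (eps : Fin (n+1) → ℤˣ) (e : Perm (Fin n)) :
    OnlyNegativeCycles (eps, fx e) ↔
      eps 0 = -1 ∧ OnlyNegativeCycles (fun j => eps j.succ, e) := by
  constructor
  · intro h
    refine ⟨?_, fun i => ?_⟩
    · have := h 0
      rw [cycleOrbit_fx_zero] at this; simpa using this
    · have := h i.succ
      rwa [cycleOrbit_fx_succ, prod_map_succ] at this
  · rintro ⟨h0, h⟩ x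
    refine Fin.cases ?_ (fun i => ?_) x
    · rw [cycleOrbit_fx_zero]; simpa using h0
    · rw [cycleOrbit_fx_succ, prod_map_succ]; exact h i

lemma prod_orbit_ins_zero (eps : Fin (n+1) → ℤˣ) (k : Fin n) (e : Perm (Fin n)) :
    ∏ j ∈ cycleOrbit (ins k e) 0, eps j = eps 0 * ∏ j ∈ cycleOrbit e k, eps j.succ := by
  rw [cycleOrbit_ins_zero, Finset.prod_insert, prod_map_succ]
  simp only [Finset.mem_map, Function.Embedding.coeFn_mk]
  rintro ⟨a, -, ha⟩
  exact Fin.succ_ne_zero a ha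

lemma ON_ins (eps : Fin (n+1) → ℤˣ) (k : Fin n) (e : Perm (Fin n)) :
    OnlyNegativeCycles (eps, ins k e) ↔
      OnlyNegativeCycles ((fun j => eps j.succ * if j = k then eps 0 else 1), e) := by
  constructor
  · intro h i
    show ∏ j ∈ cycleOrbit e i, (eps j.succ * if j = k then eps 0 else 1) = -1
    rw [prod_eps']
    by_cases hsc : e.SameCycle i k
    · rw [if_pos hsc, cycleOrbit_eq_of_sameCycle hsc]
      rw [← prod_orbit_ins_zero]
      exact h 0
    · rw [if_neg hsc, one_mul, ← prod_map_succ, ← cycleOrbit_ins_succ hsc]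
      exact h i.succ
  · intro h
    have h0 : ∏ j ∈ cycleOrbit (ins k e) 0, eps j = -1 := by
      rw [prod_orbit_ins_zero]
      have := h k
      rw [prod_eps', if_pos (Equiv.Perm.SameCycle.refl e k)] at this
      exact this
    intro x
    refine Fin.cases h0 (fun i => ?_) x
    by_cases hsc : e.SameCycle i k
    · rw [cycleOrbit_eq_of_sameCycle ((sc_ins_zero_succ.mpr hsc.symm).symm)]
      exact h0
    · rw [cycleOrbit_ins_succ hsc, prod_map_succ]
      have := h i
      rwa [prod_eps', if_neg hsc, one_mul] at this


/-! ### the big equivalence -/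

def epsEquiv (p : Fin (n+1)) : (Fin (n+1) → ℤˣ) ≃ ℤˣ × (Fin n → ℤˣ) where
  toFun eps := (eps 0, fun j => eps j.succ * if j.succ = p then eps 0 else 1)
  invFun x := Fin.cases x.1 (fun j => x.2 j * if j.succ = p then x.1 else 1)
  left_inv eps := by
    funext x
    refine Fin.cases ?_ (fun j => ?_) x
    · simp
    · simp only [Fin.cases_succ]
      by_cases h : j.succ = p <;> simp [h, mul_assoc, Int.units_mul_self]
  right_inv x := by
    obtain ⟨u, eps'⟩ := x
    refine Prod.ext ?_ ?_
    · simp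
    · funext j
      simp only [Fin.cases_succ, Fin.cases_zero]
      by_cases h : j.succ = p <;> simp [h, mul_assoc, Int.units_mul_self]

def bigEquiv : ((Fin (n+1) → ℤˣ) × Perm (Fin (n+1))) ≃
    (Fin (n+1) × (Perm (Fin n) × (ℤˣ × (Fin n → ℤˣ)))) :=
  (Equiv.prodComm _ _).trans <|
    ((Equiv.Perm.decomposeFin.prodCongr (Equiv.refl _)).trans
      (Equiv.prodAssoc _ _ _)).trans <|
        Equiv.prodShear (Equiv.refl _) (fun p => (Equiv.refl _).prodCongr (epsEquiv p))

lemma bigEquiv_symm_apply (p : Fin (n+1)) (e : Perm (Fin n)) (u : ℤˣ) (eps' : Fin n → ℤˣ) :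
    bigEquiv.symm (p, (e, (u, eps'))) =
      ((Fin.cases u (fun j => eps' j * if j.succ = p then u else 1) : Fin (n+1) → ℤˣ),
        Equiv.Perm.decomposeFin.symm (p, e)) := rfl

def Q (s : ℤˣ) (p : Fin (n+1)) (y : Perm (Fin n) × (ℤˣ × (Fin n → ℤˣ))) : Prop :=
  OnlyNegativeCycles (y.2.2, y.1) ∧ (p = 0 → y.2.1 = -1) ∧
    (if p = 0 then y.2.1 * ∏ j, y.2.2 j else ∏ j, y.2.2 j) = s

lemma transport (s : ℤˣ) (b : Fin (n+1) × (Perm (Fin n) × (ℤˣ × (Fin n → ℤˣ)))) :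
    (OnlyNegativeCycles (bigEquiv.symm b) ∧ ∏ i, (bigEquiv.symm b).1 i = s) ↔ Q s b.1 b.2 := by
  obtain ⟨p, e, u, eps'⟩ := b
  rw [bigEquiv_symm_apply]
  induction p using Fin.cases with
  | zero =>
    set eps : Fin (n+1) → ℤˣ :=
      (Fin.cases u (fun j => eps' j * if j.succ = 0 then u else 1) : Fin (n+1) → ℤˣ) with heps
    have hsucc : (fun j => eps j.succ) = eps' := by
      funext j
      simp [heps, Fin.succ_ne_zero]
    have h0 : eps 0 = u := rfl
    have hON : OnlyNegativeCycles (eps, Equiv.Perm.decomposeFin.symm (0, e)) ↔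
        (eps 0 = -1 ∧ OnlyNegativeCycles (fun j => eps j.succ, e)) := ON_fx eps e
    rw [hsucc, h0] at hON
    have hprod : ∏ i, eps i = u * ∏ j, eps' j := by
      rw [Fin.prod_univ_succ, h0, hsucc]
    show (OnlyNegativeCycles (eps, _) ∧ ∏ i, eps i = s) ↔ Q s 0 (e, u, eps')
    rw [hON, hprod]
    unfold Q
    simp only [if_pos rfl]
    constructor
    · rintro ⟨⟨hu, hone⟩, hp⟩; exact ⟨hone, fun _ => hu, hp⟩
    · rintro ⟨hone, hu, hp⟩; exact ⟨⟨hu (by trivial), hone⟩, hp⟩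
  | succ k =>
    set eps : Fin (n+1) → ℤˣ :=
      (Fin.cases u (fun j => eps' j * if j.succ = k.succ then u else 1) : Fin (n+1) → ℤˣ) with heps
    have h0 : eps 0 = u := rfl
    have hsucc : ∀ j, eps j.succ = eps' j * if j = k then u else 1 := by
      intro j
      simp only [heps, Fin.cases_succ, Fin.succ_inj]
    have hON : OnlyNegativeCycles (eps, Equiv.Perm.decomposeFin.symm (k.succ, e)) ↔
        OnlyNegativeCycles (eps', e) := by
      rw [show Equiv.Perm.decomposeFin.symm (k.succ, e) = ins k e from rfl, ON_ins]
      have : (fun j => eps j.succ * if j = k then eps 0 else 1) = eps' := by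
        funext j
        rw [hsucc, h0]
        by_cases h : j = k <;> simp [h, mul_assoc, Int.units_mul_self]
      rw [this]
    have hprod : ∏ i, eps i = ∏ j, eps' j := by
      rw [Fin.prod_univ_succ, h0]
      simp only [hsucc]
      rw [Finset.prod_mul_distrib, Finset.prod_ite_eq' Finset.univ k (fun _ => u),
        if_pos (Finset.mem_univ k), ← mul_assoc, mul_comm u, mul_assoc, Int.units_mul_self,
        mul_one]
    show (OnlyNegativeCycles (eps, _) ∧ ∏ i, eps i = s) ↔ Q s k.succ (e, u, eps')
    rw [hON, hprod]
    unfold Q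
    simp only [if_neg (Fin.succ_ne_zero k)]
    constructor
    · rintro ⟨ha, hb⟩; exact ⟨ha, fun h => absurd h (Fin.succ_ne_zero k), hb⟩
    · rintro ⟨ha, -, hb⟩; exact ⟨ha, hb⟩

/-! ### counting -/

noncomputable def Cnt (n : ℕ) (s : ℤˣ) : ℕ :=
  Nat.card {w : (Fin n → ℤˣ) × Equiv.Perm (Fin n) //
    OnlyNegativeCycles w ∧ ∏ i : Fin n, w.1 i = s}

def fiberZeroEquiv (s : ℤˣ) :
    {y : Perm (Fin n) × (ℤˣ × (Fin n → ℤˣ)) // Q s (0 : Fin (n+1)) y} ≃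
      {w : (Fin n → ℤˣ) × Equiv.Perm (Fin n) //
        OnlyNegativeCycles w ∧ ∏ i : Fin n, w.1 i = -s} where
  toFun y := ⟨(y.1.2.2, y.1.1), y.2.1, by
    have hu := y.2.2.1 rfl
    have hp := y.2.2.2
    rw [if_pos rfl, hu] at hp
    have hgoal : ∏ j : Fin n, y.1.2.2 j = -(-1 * ∏ j : Fin n, y.1.2.2 j) := by simp
    rw [hp] at hgoal
    exact hgoal⟩
  invFun w := ⟨(w.1.2, (-1, w.1.1)), w.2.1, fun _ => rfl, by rw [if_pos rfl, w.2.2]; simp⟩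
  left_inv y := by
    obtain ⟨⟨e, u, eps'⟩, hy⟩ := y
    have hu : u = -1 := hy.2.1 rfl
    exact Subtype.ext (by simp [hu])
  right_inv w := rfl

def fiberSuccEquiv (s : ℤˣ) (k : Fin n) :
    {y : Perm (Fin n) × (ℤˣ × (Fin n → ℤˣ)) // Q s k.succ y} ≃
      ℤˣ × {w : (Fin n → ℤˣ) × Equiv.Perm (Fin n) //
        OnlyNegativeCycles w ∧ ∏ i : Fin n, w.1 i = s} where
  toFun y := (y.1.2.1, ⟨(y.1.2.2, y.1.1), y.2.1, by
    have := y.2.2.2; rwa [if_neg (Fin.succ_ne_zero k)] at this⟩)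
  invFun x := ⟨(x.2.1.2, (x.1, x.2.1.1)), x.2.2.1,
    fun h => absurd h (Fin.succ_ne_zero k),
    by rw [if_neg (Fin.succ_ne_zero k)]; exact x.2.2.2⟩
  left_inv y := rfl
  right_inv x := rfl

lemma card_units_int : Nat.card ℤˣ = 2 := by
  simp [Nat.card_eq_fintype_card]

lemma nat_card_sigma {ι : Type*} [Fintype ι] (f : ι → Type*) [∀ i, Finite (f i)] :
    Nat.card ((i : ι) × f i) = ∑ i, Nat.card (f i) := by
  letI : ∀ i, Fintype (f i) := fun i => Fintype.ofFinite _
  simp [Nat.card_eq_fintype_card, Fintype.card_sigma]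

lemma Cnt_rec (s : ℤˣ) : Cnt (n+1) s = Cnt n (-s) + n * (2 * Cnt n s) := by
  have E : {w : (Fin (n+1) → ℤˣ) × Equiv.Perm (Fin (n+1)) //
      OnlyNegativeCycles w ∧ ∏ i : Fin (n+1), w.1 i = s} ≃
      {b : Fin (n+1) × (Perm (Fin n) × (ℤˣ × (Fin n → ℤˣ))) // Q s b.1 b.2} := by
    refine Equiv.subtypeEquiv bigEquiv (fun a => ?_)
    conv_lhs => rw [← Equiv.symm_apply_apply bigEquiv a]
    exact transport s (bigEquiv a)
  rw [Cnt, Nat.card_congr E,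
    Nat.card_congr (Equiv.subtypeProdEquivSigmaSubtype (fun p y => Q s p y)),
    nat_card_sigma, Fin.sum_univ_succ, Nat.card_congr (fiberZeroEquiv s)]
  have : ∀ k : Fin n, Nat.card {y // Q s (Fin.succ k) y} = 2 * Cnt n s := by
    intro k
    rw [Nat.card_congr (fiberSuccEquiv s k), Nat.card_prod, card_units_int, Cnt]
  simp only [this, Finset.sum_const, Finset.card_univ, Fintype.card_fin, smul_eq_mul]
  rfl


lemma Cnt_zero_one : Cnt 0 1 = 1 := by
  have : Unique {w : (Fin 0 → ℤˣ) × Equiv.Perm (Fin 0) //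
      OnlyNegativeCycles w ∧ ∏ i : Fin 0, w.1 i = 1} :=
    { default := ⟨(fun i => i.elim0, 1), fun i => i.elim0, by simp⟩
      uniq := fun a => Subtype.ext (Prod.ext (funext fun i => i.elim0)
        (Equiv.ext fun i => i.elim0)) }
  exact Nat.card_unique

lemma Cnt_zero_neg : Cnt 0 (-1) = 0 := by
  have : IsEmpty {w : (Fin 0 → ℤˣ) × Equiv.Perm (Fin 0) //
      OnlyNegativeCycles w ∧ ∏ i : Fin 0, w.1 i = -1} := by
    refine ⟨fun a => ?_⟩
    have := a.2.2
    simp at this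
  exact Nat.card_of_isEmpty

lemma df_step (m : ℕ) : (2 * m + 1)‼ = (2 * m + 1) * (2 * m - 1)‼ := by
  cases m with
  | zero => decide
  | succ m =>
    have h1 : 2 * (m + 1) + 1 = (2 * m + 1) + 2 := by omega
    have h2 : 2 * (m + 1) - 1 = 2 * m + 1 := by omega
    rw [h1, h2, Nat.doubleFactorial_add_two]

lemma main (m : ℕ) : Cnt (m+1) 1 = m * (2 * m - 1)‼ ∧ Cnt (m+1) (-1) = (m+1) * (2 * m - 1)‼ := by
  induction m with
  | zero =>
    constructor
    · rw [Cnt_rec, Cnt_zero_neg]; simp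
    · rw [Cnt_rec, show (-(-1 : ℤˣ)) = 1 by decide, Cnt_zero_one]; simp
  | succ m ih =>
    obtain ⟨ih1, ih2⟩ := ih
    have h2 : 2 * (m + 1) - 1 = 2 * m + 1 := by omega
    constructor
    · rw [Cnt_rec, ih1, ih2, h2, df_step]
      ring
    · rw [Cnt_rec, show (-(-1 : ℤˣ)) = 1 by decide, ih1, ih2, h2, df_step]
      ring

end S3

theorem stmt_3 (n : ℕ) (hn : 1 ≤ n) :
    Nat.card {w : (Fin n → ℤˣ) × Equiv.Perm (Fin n) //
        OnlyNegativeCycles w ∧ ∏ i : Fin n, w.1 i = 1}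
      = (n - 1) * (2 * n - 3)‼ := by
  obtain ⟨m, rfl⟩ : ∃ m, n = m + 1 := ⟨n - 1, by omega⟩
  have h1 : m + 1 - 1 = m := by omega
  have h2 : 2 * (m + 1) - 3 = 2 * m - 1 := by omega
  rw [h1, h2]
  exact S3.main m |>.1
end

section
/- Let n ≥ 1. The proportion p⁺(n) of elements of W(D_n) having only negative cycles, i.e., the number of pairs (ε, π) with only negative cycles and ∏_i ε i = +1 divided by |W(D_n)| = 2^(n−1) · n!, satisfies p⁺(n) = p(n) · (2n−2)/(2n−1), where p(n) = (2n−1)!!/(2^n · n!). -/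
open Finset Nat

lemma invariant_pow {α : Type*} (f : Equiv.Perm α) (Q : α → Prop)
    (h : ∀ x, Q (f x) ↔ Q x) (k : ℕ) (x : α) : Q ((f ^ k) x) ↔ Q x := by
  induction k generalizing x with
  | zero => simp
  | succ m ih => rw [pow_succ _ m, Equiv.Perm.mul_apply, ih (f x), h x]

lemma sameCycle_invariant {α : Type*} [Finite α] (f : Equiv.Perm α) (Q : α → Prop)
    (h : ∀ x, Q (f x) ↔ Q x) {x y : α} (hxy : f.SameCycle x y) : Q x ↔ Q y := by
  obtain ⟨k, _, rfl⟩ := hxy.exists_pow_eq'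
  exact (invariant_pow f Q h k x).symm

variable {n : ℕ}

lemma sc_step (e : Equiv.Perm (Fin n)) (p : Fin (n + 1)) (a : Fin n) :
    (Equiv.Perm.decomposeFin.symm (p, e)).SameCycle a.succ (e a).succ := by
  set σ := Equiv.Perm.decomposeFin.symm (p, e) with hσ
  have h1 : σ.SameCycle a.succ (σ a.succ) := ⟨1, by simp⟩
  have hs : σ a.succ = Equiv.swap 0 p (e a).succ := by
    rw [hσ, Equiv.Perm.decomposeFin_symm_apply_succ]
  by_cases hp : (e a).succ = p
  · have h0 : σ a.succ = 0 := by rw [hs, hp, Equiv.swap_apply_right]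
    have h2 : σ.SameCycle 0 (σ 0) := ⟨1, by simp⟩
    have h3 : σ 0 = p := by rw [hσ]; exact Equiv.Perm.decomposeFin_symm_apply_zero p e
    rw [h0] at h1
    rw [h3, ← hp] at h2
    exact h1.trans h2
  · have : σ a.succ = (e a).succ := by
      rw [hs, Equiv.swap_apply_of_ne_of_ne (Fin.succ_ne_zero _) hp]
    rwa [this] at h1

lemma Qinv (e : Equiv.Perm (Fin n)) (p : Fin (n + 1)) (a : Fin n)
    (C : Prop) (hC : Fin.cases C (fun b => e.SameCycle a b) p ↔ C) :
    ∀ x : Fin (n + 1),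
      (Fin.cases C (fun b => e.SameCycle a b) (Equiv.Perm.decomposeFin.symm (p, e) x) : Prop)
        ↔ Fin.cases C (fun b => e.SameCycle a b) x := by
  intro x
  induction x using Fin.cases with
  | zero =>
    rw [Equiv.Perm.decomposeFin_symm_apply_zero]
    simpa using hC
  | succ c =>
    rw [Equiv.Perm.decomposeFin_symm_apply_succ]
    by_cases hp : (e c).succ = p
    · rw [hp, Equiv.swap_apply_right]
      simp only [Fin.cases_zero, Fin.cases_succ]
      rw [← hC, ← hp]
      simp only [Fin.cases_succ]
      exact Equiv.Perm.sameCycle_apply_right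
    · rw [Equiv.swap_apply_of_ne_of_ne (Fin.succ_ne_zero _) hp]
      simp only [Fin.cases_succ]
      exact Equiv.Perm.sameCycle_apply_right

lemma sc_succ_of (e : Equiv.Perm (Fin n)) (p : Fin (n + 1)) {a b : Fin n}
    (h : e.SameCycle a b) :
    (Equiv.Perm.decomposeFin.symm (p, e)).SameCycle a.succ b.succ := by
  obtain ⟨k, _, rfl⟩ := h.exists_pow_eq'
  clear * -
  induction k generalizing a with
  | zero => exact Equiv.Perm.SameCycle.refl _ _
  | succ m ih =>
    rw [pow_succ _ m, Equiv.Perm.mul_apply]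
    exact (sc_step e p a).trans (ih (a := e a))

lemma sc_succ_iff (e : Equiv.Perm (Fin n)) (p : Fin (n + 1)) (a b : Fin n) :
    (Equiv.Perm.decomposeFin.symm (p, e)).SameCycle a.succ b.succ ↔ e.SameCycle a b := by
  constructor
  · intro h
    induction p using Fin.cases with
    | zero =>
      have := (sameCycle_invariant _ _ (Qinv e 0 a False (by simp)) h)
      simpa using this.mp (by simpa using Equiv.Perm.SameCycle.refl e a)
    | succ q =>
      have := (sameCycle_invariant _ _ (Qinv e q.succ a (e.SameCycle a q) (by simp)) h)
      simpa using this.mp (by simpa using Equiv.Perm.SameCycle.refl e a)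
  · exact sc_succ_of e p

lemma sc_zero_iff_zero (e : Equiv.Perm (Fin n)) (y : Fin (n + 1)) :
    (Equiv.Perm.decomposeFin.symm ((0 : Fin (n + 1)), e)).SameCycle 0 y ↔ y = 0 := by
  constructor
  · intro h
    have hinv : ∀ x : Fin (n + 1),
        (Fin.cases True (fun _ => False) (Equiv.Perm.decomposeFin.symm ((0 : Fin (n+1)), e) x) : Prop)
          ↔ Fin.cases True (fun _ => False) x := by
      intro x
      induction x using Fin.cases with
      | zero => rw [Equiv.Perm.decomposeFin_symm_apply_zero]
      | succ c =>
        rw [Equiv.Perm.decomposeFin_symm_apply_succ, Equiv.swap_self]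
        simp
    have := (sameCycle_invariant _ _ hinv h).mp (by simp)
    induction y using Fin.cases with
    | zero => rfl
    | succ c => simp at this
  · rintro rfl; exact Equiv.Perm.SameCycle.refl _ _

lemma sc_zero_succ_iff (e : Equiv.Perm (Fin n)) (q a : Fin n) :
    (Equiv.Perm.decomposeFin.symm (q.succ, e)).SameCycle 0 a.succ ↔ e.SameCycle q a := by
  constructor
  · intro h
    have := (sameCycle_invariant _ _ (Qinv e q.succ a (e.SameCycle a q) (by simp)) h.symm)
    have h2 := this.mp (by simpa using Equiv.Perm.SameCycle.refl e a)
    simpa using (h2 : Fin.cases (e.SameCycle a q) (fun b => e.SameCycle a b) 0).symm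
  · intro h
    have h0 : (Equiv.Perm.decomposeFin.symm (q.succ, e)).SameCycle 0 q.succ := by
      have : Equiv.Perm.decomposeFin.symm (q.succ, e) 0 = q.succ :=
        Equiv.Perm.decomposeFin_symm_apply_zero _ e
      exact this ▸ (⟨1, by simp⟩ : (Equiv.Perm.decomposeFin.symm (q.succ, e)).SameCycle 0
        (Equiv.Perm.decomposeFin.symm (q.succ, e) 0))
    exact h0.trans (sc_succ_of e q.succ h)

-- orbit lemmas
lemma orb_succ_core (e : Equiv.Perm (Fin n)) (p : Fin (n + 1)) (a : Fin n)
    (hzero : ¬ (Equiv.Perm.decomposeFin.symm (p, e)).SameCycle a.succ 0) :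
    cycleOrbit (Equiv.Perm.decomposeFin.symm (p, e)) a.succ = (cycleOrbit e a).image Fin.succ := by
  ext x
  simp only [cycleOrbit, Finset.mem_filter, Finset.mem_univ, true_and, Finset.mem_image]
  induction x using Fin.cases with
  | zero =>
    have hne : ∀ b : Fin n, ¬ (b.succ = (0 : Fin (n+1))) := fun b => Fin.succ_ne_zero b
    simp only [hne, and_false, exists_false, iff_false]
    exact hzero
  | succ c =>
    rw [sc_succ_iff]
    constructor
    · exact fun h => ⟨c, h, rfl⟩
    · rintro ⟨b, hb, hbc⟩
      rwa [← Fin.succ_inj.mp hbc]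

lemma orb_succ0 (e : Equiv.Perm (Fin n)) (a : Fin n) :
    cycleOrbit (Equiv.Perm.decomposeFin.symm ((0 : Fin (n+1)), e)) a.succ
      = (cycleOrbit e a).image Fin.succ := by
  refine orb_succ_core e 0 a (fun h => ?_)
  exact Fin.succ_ne_zero a ((sc_zero_iff_zero e a.succ).mp h.symm)

lemma orb_succq (e : Equiv.Perm (Fin n)) (q a : Fin n) (hq : ¬ e.SameCycle q a) :
    cycleOrbit (Equiv.Perm.decomposeFin.symm (q.succ, e)) a.succ
      = (cycleOrbit e a).image Fin.succ := by
  refine orb_succ_core e q.succ a (fun h => ?_)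
  exact hq ((sc_zero_succ_iff e q a).mp h.symm)

lemma orb_succ_in (e : Equiv.Perm (Fin n)) (q a : Fin n) (h : e.SameCycle q a) :
    cycleOrbit (Equiv.Perm.decomposeFin.symm (q.succ, e)) a.succ
      = insert 0 ((cycleOrbit e a).image Fin.succ) := by
  ext x
  simp only [cycleOrbit, Finset.mem_filter, Finset.mem_univ, true_and, Finset.mem_image,
    Finset.mem_insert]
  induction x using Fin.cases with
  | zero =>
    have hne : ∀ b : Fin n, ¬ (b.succ = (0 : Fin (n+1))) := fun b => Fin.succ_ne_zero b
    simp only [hne, and_false, exists_false, or_false]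
    simp only [eq_self_iff_true, iff_true]
    exact ((sc_zero_succ_iff e q a).mpr h).symm
  | succ c =>
    rw [sc_succ_iff]
    have hne : (c.succ : Fin (n+1)) ≠ 0 := Fin.succ_ne_zero c
    simp only [hne, false_or]
    constructor
    · exact fun h => ⟨c, h, rfl⟩
    · rintro ⟨b, hb, hbc⟩
      rwa [← Fin.succ_inj.mp hbc]

lemma orb_zero_zero (e : Equiv.Perm (Fin n)) :
    cycleOrbit (Equiv.Perm.decomposeFin.symm ((0 : Fin (n + 1)), e)) 0 = {0} := by
  ext x
  simp only [cycleOrbit, Finset.mem_filter, Finset.mem_univ, true_and, Finset.mem_singleton]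
  exact sc_zero_iff_zero e x

lemma orb_zero_succ (e : Equiv.Perm (Fin n)) (q : Fin n) :
    cycleOrbit (Equiv.Perm.decomposeFin.symm (q.succ, e)) 0
      = cycleOrbit (Equiv.Perm.decomposeFin.symm (q.succ, e)) q.succ := by
  have h0 : (Equiv.Perm.decomposeFin.symm (q.succ, e)).SameCycle 0 q.succ := by
    have : Equiv.Perm.decomposeFin.symm (q.succ, e) 0 = q.succ :=
      Equiv.Perm.decomposeFin_symm_apply_zero _ e
    exact this ▸ (⟨1, by simp⟩ : (Equiv.Perm.decomposeFin.symm (q.succ, e)).SameCycle 0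
      (Equiv.Perm.decomposeFin.symm (q.succ, e) 0))
  ext x
  simp only [cycleOrbit, Finset.mem_filter, Finset.mem_univ, true_and]
  exact ⟨fun h => h0.symm.trans h, fun h => h0.trans h⟩

def epsOf (p : Fin (n + 1)) (s : ℤˣ) (ε' : Fin n → ℤˣ) : Fin (n + 1) → ℤˣ :=
  Fin.cons s (fun j => (if j.succ = p then s else 1) * ε' j)

lemma mem_cycleOrbit_s4 (e : Equiv.Perm (Fin n)) (a b : Fin n) :
    b ∈ cycleOrbit e a ↔ e.SameCycle a b := by simp [cycleOrbit]

lemma prod_orbit0 (e : Equiv.Perm (Fin n)) (s : ℤˣ) (ε' : Fin n → ℤˣ) (a : Fin n) :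
    ∏ j ∈ cycleOrbit (Equiv.Perm.decomposeFin.symm ((0 : Fin (n+1)), e)) a.succ,
      epsOf 0 s ε' j = ∏ j ∈ cycleOrbit e a, ε' j := by
  rw [orb_succ0, Finset.prod_image (fun x _ y _ h => Fin.succ_inj.mp h)]
  refine Finset.prod_congr rfl fun j _ => ?_
  simp [epsOf, Fin.succ_ne_zero]

lemma prod_orbitq (e : Equiv.Perm (Fin n)) (q : Fin n) (s : ℤˣ) (ε' : Fin n → ℤˣ) (a : Fin n) :
    ∏ j ∈ cycleOrbit (Equiv.Perm.decomposeFin.symm (q.succ, e)) a.succ,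
      epsOf q.succ s ε' j = ∏ j ∈ cycleOrbit e a, ε' j := by
  have hinj : ∀ x ∈ cycleOrbit e a, ∀ y ∈ cycleOrbit e a, Fin.succ x = Fin.succ y → x = y :=
    fun x _ y _ h => Fin.succ_inj.mp h
  have hterm : ∀ j : Fin n, epsOf q.succ s ε' j.succ = (if j = q then s else 1) * ε' j := by
    intro j
    simp only [epsOf, Fin.cons_succ, Fin.succ_inj]
  have hprod : ∏ j ∈ cycleOrbit e a, epsOf q.succ s ε' j.succ
      = (if q ∈ cycleOrbit e a then s else 1) * ∏ j ∈ cycleOrbit e a, ε' j := by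
    simp only [hterm]
    rw [Finset.prod_mul_distrib]
    congr 1
    exact Finset.prod_ite_eq' (cycleOrbit e a) q (fun _ => s)
  by_cases hqa : e.SameCycle q a
  · rw [orb_succ_in e q a hqa]
    have h0 : (0 : Fin (n+1)) ∉ (cycleOrbit e a).image Fin.succ := by
      simp only [Finset.mem_image]
      rintro ⟨b, _, hb⟩
      exact Fin.succ_ne_zero b hb
    rw [Finset.prod_insert h0, Finset.prod_image hinj, hprod,
      if_pos ((mem_cycleOrbit_s4 e a q).mpr hqa.symm)]
    have h00 : epsOf q.succ s ε' 0 = s := rfl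
    rw [h00, ← mul_assoc, Int.units_mul_self, one_mul]
  · rw [orb_succq e q a hqa, Finset.prod_image hinj, hprod,
      if_neg (fun hmem => hqa ((mem_cycleOrbit_s4 e a q).mp hmem).symm), one_mul]

lemma key_prod (p : Fin (n + 1)) (s : ℤˣ) (ε' : Fin n → ℤˣ) :
    ∏ i, epsOf p s ε' i = if p = 0 then s * ∏ j, ε' j else ∏ j, ε' j := by
  rw [Fin.prod_univ_succ]
  have h0 : epsOf p s ε' 0 = s := rfl
  have hsucc : ∀ j : Fin n, epsOf p s ε' j.succ = (if j.succ = p then s else 1) * ε' j :=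
    fun j => rfl
  simp only [h0, hsucc]
  rw [Finset.prod_mul_distrib]
  induction p using Fin.cases with
  | zero =>
    have : ∀ j : Fin n, (if j.succ = (0 : Fin (n+1)) then s else 1) = 1 := by
      intro j; rw [if_neg (Fin.succ_ne_zero j)]
    simp only [this, Finset.prod_const_one, one_mul, if_pos rfl]
    simp
  | succ q =>
    have : ∀ j : Fin n, (if j.succ = q.succ then s else 1) = (if j = q then s else 1) := by
      intro j; simp [Fin.succ_inj]
    simp only [this]
    rw [Finset.prod_ite_eq' Finset.univ q (fun _ => s), if_pos (Finset.mem_univ q),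
      if_neg (Fin.succ_ne_zero q), ← mul_assoc, Int.units_mul_self, one_mul]

lemma key_neg (e : Equiv.Perm (Fin n)) (p : Fin (n + 1)) (s : ℤˣ) (ε' : Fin n → ℤˣ) :
    OnlyNegativeCycles (epsOf p s ε', Equiv.Perm.decomposeFin.symm (p, e))
      ↔ (OnlyNegativeCycles (ε', e) ∧ (p = 0 → s = -1)) := by
  induction p using Fin.cases with
  | zero =>
    constructor
    · intro h
      refine ⟨fun a => ?_, fun _ => ?_⟩
      · have := h a.succ
        rwa [prod_orbit0 e s ε' a] at this
      · have := h 0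
        rw [orb_zero_zero, Finset.prod_singleton] at this
        exact this
    · rintro ⟨h', hs⟩ i
      induction i using Fin.cases with
      | zero =>
        rw [orb_zero_zero, Finset.prod_singleton]
        exact hs rfl
      | succ a => rw [prod_orbit0 e s ε' a]; exact h' a
  | succ q =>
    have hq0 : (q.succ : Fin (n+1)) ≠ 0 := Fin.succ_ne_zero q
    constructor
    · intro h
      refine ⟨fun a => ?_, fun h0 => absurd h0 hq0⟩
      have := h a.succ
      rwa [prod_orbitq e q s ε' a] at this
    · rintro ⟨h', _⟩ i
      induction i using Fin.cases with
      | zero =>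
        rw [orb_zero_succ, prod_orbitq e q s ε' q]
        exact h' q
      | succ a => rw [prod_orbitq e q s ε' a]; exact h' a

def Psi (n : ℕ) : ((Fin (n+1) × ℤˣ) × ((Fin n → ℤˣ) × Equiv.Perm (Fin n)))
    ≃ ((Fin (n+1) → ℤˣ) × Equiv.Perm (Fin (n+1))) where
  toFun x := (epsOf x.1.1 x.1.2 x.2.1, Equiv.Perm.decomposeFin.symm (x.1.1, x.2.2))
  invFun w :=
    (((Equiv.Perm.decomposeFin w.2).1, w.1 0),
      (fun j => (if j.succ = (Equiv.Perm.decomposeFin w.2).1 then w.1 0 else 1) * w.1 j.succ,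
        (Equiv.Perm.decomposeFin w.2).2))
  left_inv := by
    rintro ⟨⟨p, s⟩, ⟨ε', e⟩⟩
    have hd : Equiv.Perm.decomposeFin (Equiv.Perm.decomposeFin.symm (p, e)) = (p, e) :=
      Equiv.Perm.decomposeFin.apply_symm_apply _
    simp only [hd]
    have h0 : epsOf p s ε' 0 = s := rfl
    refine Prod.ext (Prod.ext rfl h0) (Prod.ext ?_ rfl)
    funext j
    have hs : epsOf p s ε' j.succ = (if j.succ = p then s else 1) * ε' j := rfl
    show (if j.succ = p then s else 1) * epsOf p s ε' j.succ = ε' j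
    rw [hs, ← mul_assoc]
    by_cases h : j.succ = p <;> simp [h]
  right_inv := by
    rintro ⟨ε, π⟩
    have hd : Equiv.Perm.decomposeFin.symm (Equiv.Perm.decomposeFin π) = π :=
      Equiv.Perm.decomposeFin.symm_apply_apply _
    refine Prod.ext ?_ (by simp [hd])
    funext i
    induction i using Fin.cases with
    | zero => rfl
    | succ j =>
      show (if j.succ = (Equiv.Perm.decomposeFin π).1 then ε 0 else 1)
        * ((if j.succ = (Equiv.Perm.decomposeFin π).1 then ε 0 else 1) * ε j.succ) = ε j.succ
      rw [← mul_assoc]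
      by_cases h : j.succ = (Equiv.Perm.decomposeFin π).1 <;> simp [h]

def prodSubtypeSigma {α β : Type*} (P : α × β → Prop) :
    {x : α × β // P x} ≃ Σ a : α, {b : β // P (a, b)} where
  toFun x := ⟨x.1.1, ⟨x.1.2, by rw [Prod.mk.eta]; exact x.2⟩⟩
  invFun y := ⟨(y.1, y.2.1), y.2.2⟩
  left_inv := by rintro ⟨⟨a, b⟩, h⟩; rfl
  right_inv := by rintro ⟨a, ⟨b, h⟩⟩; rfl

lemma card_prod_subtype {α β : Type*} [Fintype α] [Fintype β] (P : α × β → Prop) :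
    Nat.card {x : α × β // P x} = ∑ a : α, Nat.card {b : β // P (a, b)} := by
  classical
  rw [Nat.card_eq_fintype_card, Fintype.card_congr (prodSubtypeSigma P), Fintype.card_sigma]
  exact Finset.sum_congr rfl fun a _ => (Nat.card_eq_fintype_card).symm

lemma card_split {γ : Type*} [Finite γ] (P : γ → Prop) (f : γ → ℤˣ) :
    Nat.card {x : γ // P x}
      = Nat.card {x : γ // P x ∧ f x = 1} + Nat.card {x : γ // P x ∧ f x = -1} := by
  classical
  rw [← Nat.card_sum]
  refine Nat.card_congr ⟨fun x => if h : f x.1 = 1 then Sum.inl ⟨x.1, x.2, h⟩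
    else Sum.inr ⟨x.1, x.2, (Int.units_eq_one_or (f x.1)).resolve_left h⟩,
    fun y => y.elim (fun z => ⟨z.1, z.2.1⟩) (fun z => ⟨z.1, z.2.1⟩), ?_, ?_⟩
  · rintro ⟨x, hx⟩
    by_cases h : f x = 1 <;> simp [h]
  · rintro (⟨x, hx, h1⟩ | ⟨x, hx, h1⟩)
    · simp [h1]
    · have : f x ≠ 1 := by rw [h1]; decide
      simp [this]

lemma units_sum (f : ℤˣ → ℕ) : ∑ s : ℤˣ, f s = f 1 + f (-1) := by
  rw [UnitsInt.univ, Finset.sum_pair (by decide : (1 : ℤˣ) ≠ -1)]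

lemma acard_succ (n : ℕ) :
    Nat.card {w : (Fin (n+1) → ℤˣ) × Equiv.Perm (Fin (n+1)) // OnlyNegativeCycles w}
      = (2*n+1) * Nat.card {w : (Fin n → ℤˣ) × Equiv.Perm (Fin n) // OnlyNegativeCycles w} := by
  set A := Nat.card {w : (Fin n → ℤˣ) × Equiv.Perm (Fin n) // OnlyNegativeCycles w} with hA
  rw [Nat.card_congr (Equiv.subtypeEquiv (Psi n) (fun x => Iff.rfl)).symm,
    card_prod_subtype (fun x => OnlyNegativeCycles (Psi n x))]
  have hfiber : ∀ ps : Fin (n+1) × ℤˣ,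
      Nat.card {w' : (Fin n → ℤˣ) × Equiv.Perm (Fin n) // OnlyNegativeCycles (Psi n (ps, w'))}
        = Nat.card {w' : (Fin n → ℤˣ) × Equiv.Perm (Fin n) //
            OnlyNegativeCycles w' ∧ (ps.1 = 0 → ps.2 = -1)} := by
    rintro ⟨p, s⟩
    refine Nat.card_congr (Equiv.subtypeEquivRight fun w' => ?_)
    obtain ⟨ε', e⟩ := w'
    exact key_neg e p s ε'
  simp only [hfiber]
  rw [Fintype.sum_prod_type]
  have hzero : ∀ s : ℤˣ,
      Nat.card {w' : (Fin n → ℤˣ) × Equiv.Perm (Fin n) //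
          OnlyNegativeCycles w' ∧ ((0 : Fin (n+1)) = 0 → s = -1)}
        = if s = -1 then A else 0 := by
    intro s
    by_cases hs : s = -1
    · rw [if_pos hs, hA]
      exact Nat.card_congr (Equiv.subtypeEquivRight fun w' => by simp [hs])
    · rw [if_neg hs]
      have : IsEmpty {w' : (Fin n → ℤˣ) × Equiv.Perm (Fin n) //
          OnlyNegativeCycles w' ∧ ((0 : Fin (n+1)) = 0 → s = -1)} :=
        ⟨fun x => hs (x.2.2 rfl)⟩
      exact Nat.card_of_isEmpty
  have hsuccq : ∀ (q : Fin n) (s : ℤˣ),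
      Nat.card {w' : (Fin n → ℤˣ) × Equiv.Perm (Fin n) //
          OnlyNegativeCycles w' ∧ (q.succ = 0 → s = -1)} = A := by
    intro q s
    rw [hA]
    exact Nat.card_congr (Equiv.subtypeEquivRight fun w' => by simp [Fin.succ_ne_zero])
  rw [Fin.sum_univ_succ]
  rw [units_sum (fun s => Nat.card {w' : (Fin n → ℤˣ) × Equiv.Perm (Fin n) //
      OnlyNegativeCycles w' ∧ ((0 : Fin (n+1)) = 0 → s = -1)})]
  rw [hzero 1, hzero (-1), if_neg (by decide), if_pos rfl]
  have : ∀ q : Fin n, ∑ s : ℤˣ, Nat.card {w' : (Fin n → ℤˣ) × Equiv.Perm (Fin n) //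
      OnlyNegativeCycles w' ∧ (q.succ = 0 → s = -1)} = 2 * A := by
    intro q
    rw [units_sum, hsuccq q 1, hsuccq q (-1)]
    ring
  simp only [this]
  rw [Finset.sum_const, Finset.card_univ, Fintype.card_fin, smul_eq_mul]
  ring

lemma ncard_succ (n : ℕ) :
    Nat.card {w : (Fin (n+1) → ℤˣ) × Equiv.Perm (Fin (n+1)) //
        OnlyNegativeCycles w ∧ ∏ i, w.1 i = 1}
      = Nat.card {w : (Fin n → ℤˣ) × Equiv.Perm (Fin n) //
          OnlyNegativeCycles w ∧ ∏ i, w.1 i = -1}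
        + 2 * n * Nat.card {w : (Fin n → ℤˣ) × Equiv.Perm (Fin n) //
          OnlyNegativeCycles w ∧ ∏ i, w.1 i = 1} := by
  set N := Nat.card {w : (Fin n → ℤˣ) × Equiv.Perm (Fin n) //
      OnlyNegativeCycles w ∧ ∏ i, w.1 i = 1} with hN
  set M := Nat.card {w : (Fin n → ℤˣ) × Equiv.Perm (Fin n) //
      OnlyNegativeCycles w ∧ ∏ i, w.1 i = -1} with hM
  rw [Nat.card_congr (Equiv.subtypeEquiv (Psi n) (fun x => Iff.rfl)).symm,
    card_prod_subtype (fun x => OnlyNegativeCycles (Psi n x) ∧ ∏ i, (Psi n x).1 i = 1)]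
  have hfiber : ∀ ps : Fin (n+1) × ℤˣ,
      Nat.card {w' : (Fin n → ℤˣ) × Equiv.Perm (Fin n) //
          OnlyNegativeCycles (Psi n (ps, w')) ∧ ∏ i, (Psi n (ps, w')).1 i = 1}
        = Nat.card {w' : (Fin n → ℤˣ) × Equiv.Perm (Fin n) //
            (OnlyNegativeCycles w' ∧ (ps.1 = 0 → ps.2 = -1))
              ∧ (if ps.1 = 0 then ps.2 * ∏ j, w'.1 j else ∏ j, w'.1 j) = 1} := by
    rintro ⟨p, s⟩
    refine Nat.card_congr (Equiv.subtypeEquivRight fun w' => ?_)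
    obtain ⟨ε', e⟩ := w'
    rw [show (Psi n ((p, s), (ε', e))).1 = epsOf p s ε' from rfl, key_prod p s ε']
    exact and_congr (key_neg e p s ε') Iff.rfl
  simp only [hfiber]
  rw [Fintype.sum_prod_type]
  have hval : ∀ x : ℤˣ, ((-1 : ℤˣ) * x = 1 ↔ x = -1) := by decide
  have hzero : ∀ s : ℤˣ,
      Nat.card {w' : (Fin n → ℤˣ) × Equiv.Perm (Fin n) //
          (OnlyNegativeCycles w' ∧ ((0 : Fin (n+1)) = 0 → s = -1))
            ∧ (if (0 : Fin (n+1)) = 0 then s * ∏ j, w'.1 j else ∏ j, w'.1 j) = 1}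
        = if s = -1 then M else 0 := by
    intro s
    by_cases hs : s = -1
    · rw [if_pos hs, hM]
      refine Nat.card_congr (Equiv.subtypeEquivRight fun w' => ?_)
      subst hs
      simp only [eq_self_iff_true, if_true, hval]
      tauto
    · rw [if_neg hs]
      have : IsEmpty {w' : (Fin n → ℤˣ) × Equiv.Perm (Fin n) //
          (OnlyNegativeCycles w' ∧ ((0 : Fin (n+1)) = 0 → s = -1))
            ∧ (if (0 : Fin (n+1)) = 0 then s * ∏ j, w'.1 j else ∏ j, w'.1 j) = 1} :=
        ⟨fun x => hs (x.2.1.2 rfl)⟩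
      exact Nat.card_of_isEmpty
  have hsuccq : ∀ (q : Fin n) (s : ℤˣ),
      Nat.card {w' : (Fin n → ℤˣ) × Equiv.Perm (Fin n) //
          (OnlyNegativeCycles w' ∧ ((q.succ : Fin (n+1)) = 0 → s = -1))
            ∧ (if (q.succ : Fin (n+1)) = 0 then s * ∏ j, w'.1 j else ∏ j, w'.1 j) = 1}
        = N := by
    intro q s
    rw [hN]
    refine Nat.card_congr (Equiv.subtypeEquivRight fun w' => ?_)
    simp [Fin.succ_ne_zero]
  rw [Fin.sum_univ_succ]
  rw [units_sum (fun s => Nat.card {w' : (Fin n → ℤˣ) × Equiv.Perm (Fin n) //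
      (OnlyNegativeCycles w' ∧ ((0 : Fin (n+1)) = 0 → s = -1))
        ∧ (if (0 : Fin (n+1)) = 0 then s * ∏ j, w'.1 j else ∏ j, w'.1 j) = 1})]
  rw [hzero 1, hzero (-1), if_neg (by decide), if_pos rfl]
  have hq : ∀ q : Fin n, ∑ s : ℤˣ, Nat.card {w' : (Fin n → ℤˣ) × Equiv.Perm (Fin n) //
      (OnlyNegativeCycles w' ∧ ((q.succ : Fin (n+1)) = 0 → s = -1))
        ∧ (if (q.succ : Fin (n+1)) = 0 then s * ∏ j, w'.1 j else ∏ j, w'.1 j) = 1}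
      = 2 * N := by
    intro q
    rw [units_sum, hsuccq q 1, hsuccq q (-1)]
    ring
  simp only [hq]
  rw [Finset.sum_const, Finset.card_univ, Fintype.card_fin, smul_eq_mul]
  ring

noncomputable def An (n : ℕ) : ℕ := Nat.card {w : (Fin n → ℤˣ) × Equiv.Perm (Fin n) // OnlyNegativeCycles w}
noncomputable def Nn (n : ℕ) : ℕ := Nat.card {w : (Fin n → ℤˣ) × Equiv.Perm (Fin n) //
    OnlyNegativeCycles w ∧ ∏ i, w.1 i = 1}
noncomputable def Mn (n : ℕ) : ℕ := Nat.card {w : (Fin n → ℤˣ) × Equiv.Perm (Fin n) //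
    OnlyNegativeCycles w ∧ ∏ i, w.1 i = -1}

lemma an_split (n : ℕ) : An n = Nn n + Mn n :=
  card_split OnlyNegativeCycles (fun w => ∏ i, w.1 i)

lemma an_succ (n : ℕ) : An (n + 1) = (2 * n + 1) * An n := acard_succ n
lemma nn_succ (n : ℕ) : Nn (n + 1) = Mn n + 2 * n * Nn n := ncard_succ n

lemma an0 : An 0 = 1 := by
  have hall : ∀ w : (Fin 0 → ℤˣ) × Equiv.Perm (Fin 0), OnlyNegativeCycles w :=
    fun w i => i.elim0
  rw [An, Nat.card_congr (Equiv.subtypeUnivEquiv hall), Nat.card_eq_fintype_card]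
  rfl

lemma nn0 : Nn 0 = 1 := by
  have hall : ∀ w : (Fin 0 → ℤˣ) × Equiv.Perm (Fin 0),
      OnlyNegativeCycles w ∧ ∏ i, w.1 i = 1 :=
    fun w => ⟨fun i => i.elim0, by simp⟩
  rw [Nn, Nat.card_congr (Equiv.subtypeUnivEquiv hall), Nat.card_eq_fintype_card]
  rfl

lemma mn0 : Mn 0 = 0 := by
  have : IsEmpty {w : (Fin 0 → ℤˣ) × Equiv.Perm (Fin 0) //
      OnlyNegativeCycles w ∧ ∏ i, w.1 i = -1} := by
    refine ⟨fun x => ?_⟩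
    have h := x.2.2
    simp at h
  rw [Mn]
  exact Nat.card_of_isEmpty

lemma dfact_step (n : ℕ) : (2 * n + 1)‼ = (2 * n + 1) * (2 * n - 1)‼ := by
  cases n with
  | zero => rfl
  | succ m =>
    have h1 : 2 * (m + 1) + 1 = (2 * m + 1) + 2 := by ring
    have h2 : 2 * (m + 1) - 1 = 2 * m + 1 := by omega
    rw [h1, h2, Nat.doubleFactorial_add_two]

lemma an_closed' (n : ℕ) : An n = (2 * n - 1)‼ := by
  induction n with
  | zero => simpa using an0
  | succ m ih =>
    have h : 2 * (m + 1) - 1 = 2 * m + 1 := by omega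
    rw [an_succ, ih, h, dfact_step]

lemma nn_closed (m : ℕ) : Nn (m + 1) = m * (2 * m - 1)‼ := by
  induction m with
  | zero => simp [nn_succ, mn0, nn0]
  | succ k ih =>
    have hM : Mn (k + 1) = (k + 1) * (2 * k - 1)‼ := by
      have h := an_split (k + 1)
      rw [an_closed', ih] at h
      have h2 : 2 * (k + 1) - 1 = 2 * k + 1 := by omega
      rw [h2, dfact_step] at h
      have h3 : (2 * k + 1) * (2 * k - 1)‼ = k * (2 * k - 1)‼ + (k + 1) * (2 * k - 1)‼ := by
        ring
      rw [h3] at h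
      exact (Nat.add_left_cancel h).symm
    rw [nn_succ, hM, ih]
    have h4 : 2 * (k + 1) - 1 = 2 * k + 1 := by omega
    rw [h4, dfact_step]
    ring

theorem stmt_4 (n : ℕ) (hn : 1 ≤ n) :
    (Nat.card {w : (Fin n → ℤˣ) × Equiv.Perm (Fin n) //
          OnlyNegativeCycles w ∧ ∏ i : Fin n, w.1 i = 1} : ℚ)
        / (2 ^ (n - 1) * n.factorial)
      = (((2 * n - 1)‼ : ℚ) / (2 ^ n * n.factorial))
          * ((2 * (n : ℚ) - 2) / (2 * (n : ℚ) - 1)) := by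
  obtain ⟨m, rfl⟩ : ∃ m, n = m + 1 := ⟨n - 1, by omega⟩
  have hN : Nat.card {w : (Fin (m+1) → ℤˣ) × Equiv.Perm (Fin (m+1)) //
      OnlyNegativeCycles w ∧ ∏ i : Fin (m+1), w.1 i = 1} = m * (2 * m - 1)‼ := nn_closed m
  rw [hN]
  have h1 : (2 * (m + 1) - 1)‼ = (2 * m + 1) * (2 * m - 1)‼ := by
    have h : 2 * (m + 1) - 1 = 2 * m + 1 := by omega
    rw [h, dfact_step]
  rw [h1]
  have h2 : m + 1 - 1 = m := by omega
  rw [h2]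
  have hfac : ((m + 1).factorial : ℚ) ≠ 0 := Nat.cast_ne_zero.mpr (Nat.factorial_ne_zero _)
  have h3 : 2 * ((m : ℚ) + 1) - 1 ≠ 0 := by
    have he : 2 * ((m : ℚ) + 1) - 1 = 2 * m + 1 := by ring
    rw [he]
    positivity
  push_cast
  field_simp
  ring
end

section
/- Let n ≥ 1. The proportion p⁻(n) of elements of the coset W(B_n) \ W(D_n) having only negative cycles, i.e., the number of pairs (ε, π) with only negative cycles and ∏_i ε i = −1 divided by 2^(n−1) · n!, satisfies p⁻(n) = p(n) · (2n)/(2n−1), where p(n) = (2n−1)!!/(2^n · n!). -/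
open Finset Nat

namespace NegAux

open Equiv Equiv.Perm

variable {n : ℕ}

lemma mem_cycleOrbit {π : Equiv.Perm (Fin n)} {i j : Fin n} :
    j ∈ cycleOrbit π i ↔ π.SameCycle i j := by
  simp [cycleOrbit]

lemma cycleOrbit_eq_of_sameCycle {π : Equiv.Perm (Fin n)} {i j : Fin n}
    (h : π.SameCycle i j) : cycleOrbit π j = cycleOrbit π i := by
  ext k
  simp only [mem_cycleOrbit]
  exact ⟨fun hk => h.trans hk, fun hk => h.symm.trans hk⟩

lemma cycleOrbit_eq {π : Equiv.Perm (Fin n)} {x : Fin n} {S : Finset (Fin n)}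
    (hx : x ∈ S) (hcl : ∀ y ∈ S, π y ∈ S) (hrc : ∀ y ∈ S, π.SameCycle x y) :
    cycleOrbit π x = S := by
  apply Finset.Subset.antisymm
  · intro j hj
    rw [mem_cycleOrbit] at hj
    obtain ⟨k, -, hk⟩ := hj.exists_pow_eq'
    subst hk
    clear hj
    induction k with
    | zero => simpa using hx
    | succ m ih =>
      rw [_root_.pow_succ', Equiv.Perm.mul_apply]
      exact hcl _ ih
  · intro j hj
    rw [mem_cycleOrbit]
    exact hrc j hj

lemma pi0_zero (σ : Equiv.Perm (Fin n)) :
    Equiv.Perm.decomposeFin.symm (0, σ) (0 : Fin (n + 1)) = 0 :=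
  Equiv.Perm.decomposeFin_symm_apply_zero 0 σ

lemma pi0_succ (σ : Equiv.Perm (Fin n)) (i : Fin n) :
    Equiv.Perm.decomposeFin.symm (0, σ) i.succ = (σ i).succ := by
  rw [Equiv.Perm.decomposeFin_symm_apply_succ]
  simp

lemma piq_zero (σ : Equiv.Perm (Fin n)) (q : Fin n) :
    Equiv.Perm.decomposeFin.symm (q.succ, σ) (0 : Fin (n + 1)) = q.succ :=
  Equiv.Perm.decomposeFin_symm_apply_zero q.succ σ

lemma piq_succ (σ : Equiv.Perm (Fin n)) (q : Fin n) (i : Fin n) :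
    Equiv.Perm.decomposeFin.symm (q.succ, σ) i.succ
      = if σ i = q then 0 else (σ i).succ := by
  rw [Equiv.Perm.decomposeFin_symm_apply_succ]
  by_cases h : σ i = q
  · rw [if_pos h, h, Equiv.swap_apply_right]
  · rw [if_neg h, Equiv.swap_apply_of_ne_of_ne (Fin.succ_ne_zero _)
      (by simpa [Fin.succ_inj] using h)]

lemma reach0 (σ : Equiv.Perm (Fin n)) (i j : Fin n) (h : σ.SameCycle i j) :
    (Equiv.Perm.decomposeFin.symm (0, σ)).SameCycle i.succ j.succ := by
  obtain ⟨k, -, hk⟩ := h.exists_pow_eq'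
  subst hk
  clear h
  induction k with
  | zero => simpa using Equiv.Perm.SameCycle.refl _ _
  | succ m ih =>
    rw [_root_.pow_succ', Equiv.Perm.mul_apply]
    rw [← pi0_succ σ ((σ ^ m) i)]
    exact ih.apply_right

lemma orbit0_zero (σ : Equiv.Perm (Fin n)) :
    cycleOrbit (Equiv.Perm.decomposeFin.symm (0, σ)) 0 = {0} := by
  apply cycleOrbit_eq (Finset.mem_singleton_self 0)
  · intro y hy
    rw [Finset.mem_singleton] at hy
    subst hy
    rw [pi0_zero]
    exact Finset.mem_singleton_self 0
  · intro y hy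
    rw [Finset.mem_singleton] at hy
    subst hy
    exact Equiv.Perm.SameCycle.refl _ _

lemma orbit0_succ (σ : Equiv.Perm (Fin n)) (i : Fin n) :
    cycleOrbit (Equiv.Perm.decomposeFin.symm (0, σ)) i.succ
      = (cycleOrbit σ i).map (Fin.succEmb n) := by
  apply cycleOrbit_eq
  · exact Finset.mem_map_of_mem _ (mem_cycleOrbit.2 (Equiv.Perm.SameCycle.refl _ _))
  · intro y hy
    obtain ⟨j, hj, rfl⟩ := Finset.mem_map.1 hy
    have hj' := mem_cycleOrbit.1 hj
    show Equiv.Perm.decomposeFin.symm (0, σ) j.succ ∈ _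
    rw [pi0_succ]
    exact Finset.mem_map_of_mem _ (mem_cycleOrbit.2 hj'.apply_right)
  · intro y hy
    obtain ⟨j, hj, rfl⟩ := Finset.mem_map.1 hy
    exact reach0 σ i j (mem_cycleOrbit.1 hj)

lemma reachq (σ : Equiv.Perm (Fin n)) (q : Fin n) (k : ℕ) :
    (Equiv.Perm.decomposeFin.symm (q.succ, σ)).SameCycle 0 ((σ ^ k) q).succ := by
  induction k with
  | zero =>
    rw [pow_zero]
    rw [← piq_zero σ q]
    exact (Equiv.Perm.SameCycle.refl _ _).apply_right
  | succ m ih =>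
    rw [_root_.pow_succ', Equiv.Perm.mul_apply]
    by_cases h : σ ((σ ^ m) q) = q
    · rw [h, ← piq_zero σ q]
      exact (Equiv.Perm.SameCycle.refl _ _).apply_right
    · have hp : Equiv.Perm.decomposeFin.symm (q.succ, σ) ((σ ^ m) q).succ
          = (σ ((σ ^ m) q)).succ := by rw [piq_succ, if_neg h]
      rw [← hp]
      exact ih.apply_right

lemma orbitq_zero (σ : Equiv.Perm (Fin n)) (q : Fin n) :
    cycleOrbit (Equiv.Perm.decomposeFin.symm (q.succ, σ)) 0
      = insert 0 ((cycleOrbit σ q).map (Fin.succEmb n)) := by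
  apply cycleOrbit_eq (Finset.mem_insert_self _ _)
  · intro y hy
    rcases Finset.mem_insert.1 hy with rfl | hy
    · rw [piq_zero]
      exact Finset.mem_insert_of_mem
        (Finset.mem_map_of_mem _ (mem_cycleOrbit.2 (Equiv.Perm.SameCycle.refl _ _)))
    · obtain ⟨j, hj, rfl⟩ := Finset.mem_map.1 hy
      have hj' := mem_cycleOrbit.1 hj
      show Equiv.Perm.decomposeFin.symm (q.succ, σ) j.succ ∈ _
      rw [piq_succ]
      by_cases h : σ j = q
      · rw [if_pos h]
        exact Finset.mem_insert_self _ _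
      · rw [if_neg h]
        exact Finset.mem_insert_of_mem
          (Finset.mem_map_of_mem _ (mem_cycleOrbit.2 hj'.apply_right))
  · intro y hy
    rcases Finset.mem_insert.1 hy with rfl | hy
    · exact Equiv.Perm.SameCycle.refl _ _
    · obtain ⟨j, hj, rfl⟩ := Finset.mem_map.1 hy
      obtain ⟨k, -, hk⟩ := (mem_cycleOrbit.1 hj).exists_pow_eq'
      subst hk
      exact reachq σ q k

lemma orbitq_succ_mem (σ : Equiv.Perm (Fin n)) (q i : Fin n) (h : σ.SameCycle q i) :
    cycleOrbit (Equiv.Perm.decomposeFin.symm (q.succ, σ)) i.succ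
      = cycleOrbit (Equiv.Perm.decomposeFin.symm (q.succ, σ)) 0 := by
  apply cycleOrbit_eq_of_sameCycle
  obtain ⟨k, -, hk⟩ := h.exists_pow_eq'
  subst hk
  exact reachq σ q k

lemma reachq' (σ : Equiv.Perm (Fin n)) (q i : Fin n) (h : ¬ σ.SameCycle q i) (k : ℕ) :
    (Equiv.Perm.decomposeFin.symm (q.succ, σ)).SameCycle i.succ ((σ ^ k) i).succ := by
  induction k with
  | zero => simpa using Equiv.Perm.SameCycle.refl _ _
  | succ m ih =>
    by_cases hh : σ ((σ ^ m) i) = q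
    · exfalso
      apply h
      have : σ.SameCycle i q := ⟨(m + 1 : ℕ), by rw [zpow_natCast, _root_.pow_succ', Equiv.Perm.mul_apply, hh]⟩
      exact this.symm
    · rw [_root_.pow_succ', Equiv.Perm.mul_apply]
      have hp : Equiv.Perm.decomposeFin.symm (q.succ, σ) ((σ ^ m) i).succ
          = (σ ((σ ^ m) i)).succ := by rw [piq_succ, if_neg hh]
      rw [← hp]
      exact ih.apply_right

lemma orbitq_succ (σ : Equiv.Perm (Fin n)) (q i : Fin n) (h : ¬ σ.SameCycle q i) :
    cycleOrbit (Equiv.Perm.decomposeFin.symm (q.succ, σ)) i.succ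
      = (cycleOrbit σ i).map (Fin.succEmb n) := by
  apply cycleOrbit_eq
  · exact Finset.mem_map_of_mem _ (mem_cycleOrbit.2 (Equiv.Perm.SameCycle.refl _ _))
  · intro y hy
    obtain ⟨j, hj, rfl⟩ := Finset.mem_map.1 hy
    have hj' := mem_cycleOrbit.1 hj
    have hq : σ j ≠ q := by
      intro hh
      exact h (by rw [← hh]; exact hj'.apply_right.symm)
    show Equiv.Perm.decomposeFin.symm (q.succ, σ) j.succ ∈ _
    rw [piq_succ, if_neg hq]
    exact Finset.mem_map_of_mem _ (mem_cycleOrbit.2 hj'.apply_right)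
  · intro y hy
    obtain ⟨j, hj, rfl⟩ := Finset.mem_map.1 hy
    obtain ⟨k, -, hk⟩ := (mem_cycleOrbit.1 hj).exists_pow_eq'
    subst hk
    exact reachq' σ q i h k

/-! ### products -/

lemma prod_map_succ (ε : Fin (n + 1) → ℤˣ) (t : Finset (Fin n)) :
    ∏ j ∈ t.map (Fin.succEmb n), ε j = ∏ j ∈ t, ε j.succ := by
  rw [Finset.prod_map]
  rfl

/-- multiply the value at `q` by `s`. -/
def twist (q : Fin n) (s : ℤˣ) (η : Fin n → ℤˣ) : Fin n → ℤˣ :=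
  fun j => if j = q then s * η j else η j

lemma prod_twist_mem {q : Fin n} {s : ℤˣ} {η : Fin n → ℤˣ} {t : Finset (Fin n)}
    (hq : q ∈ t) : ∏ j ∈ t, twist q s η j = s * ∏ j ∈ t, η j := by
  rw [← Finset.mul_prod_erase t _ hq, ← Finset.mul_prod_erase t η hq]
  have h1 : twist q s η q = s * η q := if_pos rfl
  have h2 : ∏ j ∈ t.erase q, twist q s η j = ∏ j ∈ t.erase q, η j :=
    Finset.prod_congr rfl fun j hj => if_neg (Finset.ne_of_mem_erase hj)
  rw [h1, h2, mul_assoc]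

lemma prod_twist_not_mem {q : Fin n} {s : ℤˣ} {η : Fin n → ℤˣ} {t : Finset (Fin n)}
    (hq : q ∉ t) : ∏ j ∈ t, twist q s η j = ∏ j ∈ t, η j :=
  Finset.prod_congr rfl fun j hj => if_neg (by rintro rfl; exact hq hj)

lemma twist_involutive (q : Fin n) (s : ℤˣ) : Function.Involutive (twist q s) := by
  intro η
  funext j
  by_cases h : j = q <;> simp [twist, h, ← mul_assoc, Int.units_mul_self]

/-- `twist` as an equivalence. -/
def twistEquiv (q : Fin n) (s : ℤˣ) : (Fin n → ℤˣ) ≃ (Fin n → ℤˣ) :=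
  (twist_involutive q s).toPerm

/-! ### the predicate under decomposition -/

lemma P_zero (s : ℤˣ) (η : Fin n → ℤˣ) (σ : Equiv.Perm (Fin n)) :
    OnlyNegativeCycles (Fin.cons s η, Equiv.Perm.decomposeFin.symm (0, σ))
      ↔ (s = -1 ∧ OnlyNegativeCycles (η, σ)) := by
  constructor
  · intro H
    refine ⟨?_, fun i => ?_⟩
    · have h0 : ∏ j ∈ cycleOrbit (Equiv.Perm.decomposeFin.symm (0, σ)) 0,
          (Fin.cons s η : Fin (n + 1) → ℤˣ) j = -1 := H 0
      rw [orbit0_zero] at h0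
      simpa using h0
    · have h1 : ∏ j ∈ cycleOrbit (Equiv.Perm.decomposeFin.symm (0, σ)) i.succ,
          (Fin.cons s η : Fin (n + 1) → ℤˣ) j = -1 := H i.succ
      rw [orbit0_succ, prod_map_succ] at h1
      simpa [Fin.cons_succ] using h1
  · rintro ⟨rfl, H⟩ i
    refine Fin.cases ?_ (fun i' => ?_) i
    · show ∏ j ∈ cycleOrbit (Equiv.Perm.decomposeFin.symm (0, σ)) 0,
        (Fin.cons (-1) η : Fin (n + 1) → ℤˣ) j = -1
      rw [orbit0_zero]
      simp
    · show ∏ j ∈ cycleOrbit (Equiv.Perm.decomposeFin.symm (0, σ)) i'.succ,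
        (Fin.cons (-1) η : Fin (n + 1) → ℤˣ) j = -1
      rw [orbit0_succ, prod_map_succ]
      simpa [Fin.cons_succ] using H i'

lemma P_succ (s : ℤˣ) (η : Fin n → ℤˣ) (σ : Equiv.Perm (Fin n)) (q : Fin n) :
    OnlyNegativeCycles (Fin.cons s η, Equiv.Perm.decomposeFin.symm (q.succ, σ))
      ↔ OnlyNegativeCycles (twist q s η, σ) := by
  have hq_mem : q ∈ cycleOrbit σ q := mem_cycleOrbit.2 (Equiv.Perm.SameCycle.refl _ _)
  have key0 : ∏ j ∈ cycleOrbit (Equiv.Perm.decomposeFin.symm (q.succ, σ)) 0,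
      (Fin.cons s η : Fin (n + 1) → ℤˣ) j = ∏ j ∈ cycleOrbit σ q, twist q s η j := by
    rw [orbitq_zero, Finset.prod_insert (by
      simp only [Finset.mem_map]
      rintro ⟨j, -, hj⟩
      exact Fin.succ_ne_zero j hj), prod_map_succ, prod_twist_mem hq_mem]
    simp [Fin.cons_succ]
  constructor
  · intro H i
    by_cases h : σ.SameCycle q i
    · show ∏ j ∈ cycleOrbit σ i, twist q s η j = -1
      rw [cycleOrbit_eq_of_sameCycle h, ← key0]
      exact H 0
    · show ∏ j ∈ cycleOrbit σ i, twist q s η j = -1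
      have hnot : q ∉ cycleOrbit σ i := by
        rw [mem_cycleOrbit]
        intro hh
        exact h hh.symm
      rw [prod_twist_not_mem hnot]
      have h1 : ∏ j ∈ cycleOrbit (Equiv.Perm.decomposeFin.symm (q.succ, σ)) i.succ,
          (Fin.cons s η : Fin (n + 1) → ℤˣ) j = -1 := H i.succ
      rw [orbitq_succ σ q i h, prod_map_succ] at h1
      simpa [Fin.cons_succ] using h1
  · intro H i
    refine Fin.cases ?_ (fun i' => ?_) i
    · show ∏ j ∈ cycleOrbit (Equiv.Perm.decomposeFin.symm (q.succ, σ)) 0,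
        (Fin.cons s η : Fin (n + 1) → ℤˣ) j = -1
      rw [key0]
      exact H q
    · by_cases h : σ.SameCycle q i'
      · show ∏ j ∈ cycleOrbit (Equiv.Perm.decomposeFin.symm (q.succ, σ)) i'.succ,
          (Fin.cons s η : Fin (n + 1) → ℤˣ) j = -1
        rw [orbitq_succ_mem σ q i' h, key0]
        exact H q
      · show ∏ j ∈ cycleOrbit (Equiv.Perm.decomposeFin.symm (q.succ, σ)) i'.succ,
          (Fin.cons s η : Fin (n + 1) → ℤˣ) j = -1
        rw [orbitq_succ σ q i' h, prod_map_succ]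
        have h1 := H i'
        have hnot : q ∉ cycleOrbit σ i' := by
          rw [mem_cycleOrbit]
          intro hh
          exact h hh.symm
        rw [prod_twist_not_mem hnot] at h1
        simpa [Fin.cons_succ] using h1

lemma prod_univ_cons (s : ℤˣ) (η : Fin n → ℤˣ) :
    ∏ i, (Fin.cons s η : Fin (n + 1) → ℤˣ) i = s * ∏ j, η j := by
  rw [Fin.prod_univ_succ]
  simp [Fin.cons_succ]

lemma prod_univ_twist (q : Fin n) (s : ℤˣ) (η : Fin n → ℤˣ) :
    ∏ j, twist q s η j = s * ∏ j, η j :=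
  prod_twist_mem (Finset.mem_univ q)

/-! ### counting -/

/-- number of `(ε, π)` with only negative cycles and total sign `t`. -/
noncomputable def N (t : ℤˣ) (n : ℕ) : ℕ :=
  Nat.card {w : (Fin n → ℤˣ) × Equiv.Perm (Fin n) //
    OnlyNegativeCycles w ∧ ∏ i, w.1 i = t}

lemma N_zero_neg : N (-1) 0 = 0 := by
  have : IsEmpty {w : (Fin 0 → ℤˣ) × Equiv.Perm (Fin 0) //
      OnlyNegativeCycles w ∧ ∏ i, w.1 i = -1} := by
    refine ⟨fun w => ?_⟩
    have := w.2.2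
    simp only [Finset.univ_eq_empty, Finset.prod_empty] at this
    exact absurd this (by decide)
  simp [N]

lemma N_zero_pos : N 1 0 = 1 := by
  rw [N, Nat.card_eq_one_iff_unique]
  constructor
  · constructor
    rintro ⟨⟨ε₁, π₁⟩, -⟩ ⟨⟨ε₂, π₂⟩, -⟩
    apply Subtype.ext
    have h1 : ε₁ = ε₂ := funext fun i => i.elim0
    have h2 : π₁ = π₂ := Equiv.ext fun i => i.elim0
    rw [Prod.mk.injEq]
    exact ⟨h1, h2⟩
  · exact ⟨⟨(fun _ => 1, 1), fun i => i.elim0, by simp⟩⟩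

lemma sum_units (g : ℤˣ → ℕ) : ∑ s : ℤˣ, g s = g 1 + g (-1) := by
  have huniv : (Finset.univ : Finset ℤˣ) = {1, -1} := by
    apply Finset.eq_of_subset_of_card_le
    · intro u _
      rcases Int.units_eq_one_or u with h | h <;> simp [h]
    · simp
  rw [huniv, Finset.sum_insert (by decide), Finset.sum_singleton]

lemma nat_card_sigma {ι : Type*} [Fintype ι] (f : ι → Type*) [∀ i, Finite (f i)] :
    Nat.card (Σ i, f i) = ∑ i, Nat.card (f i) := by
  have := fun i => Fintype.ofFinite (f i)
  simp only [Nat.card_eq_fintype_card, Fintype.card_sigma]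

lemma N_succ (t : ℤˣ) (n : ℕ) : N t (n + 1) = N (-t) n + 2 * n * N t n := by
  classical
  set Q : (Fin (n + 1) → ℤˣ) × Equiv.Perm (Fin (n + 1)) → Prop :=
    fun w => OnlyNegativeCycles w ∧ ∏ i, w.1 i = t with hQ
  let E : ((Fin (n + 1) → ℤˣ) × Equiv.Perm (Fin (n + 1)))
      ≃ ((Fin (n + 1) × ℤˣ) × ((Fin n → ℤˣ) × Equiv.Perm (Fin n))) :=
    (((Fin.consEquiv fun _ => ℤˣ).symm.prodCongr Equiv.Perm.decomposeFin).trans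
      ((Equiv.prodProdProdComm ℤˣ (Fin n → ℤˣ) (Fin (n + 1)) (Equiv.Perm (Fin n))).trans
        ((Equiv.prodComm ℤˣ (Fin (n + 1))).prodCongr (Equiv.refl _))))
  have hE : ∀ (p : Fin (n + 1)) (s : ℤˣ) (η : Fin n → ℤˣ) (σ : Equiv.Perm (Fin n)),
      E.symm ((p, s), (η, σ)) = (Fin.cons s η, Equiv.Perm.decomposeFin.symm (p, σ)) :=
    fun _ _ _ _ => rfl
  have key : N t (n + 1)
      = ∑ p : Fin (n + 1), ∑ s : ℤˣ,
          Nat.card {y : (Fin n → ℤˣ) × Equiv.Perm (Fin n) // Q (E.symm ((p, s), y))} := by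
    have e1 : N t (n + 1)
        = Nat.card {x : (Fin (n + 1) × ℤˣ) × ((Fin n → ℤˣ) × Equiv.Perm (Fin n)) //
            Q (E.symm x)} :=
      Nat.card_congr (Equiv.subtypeEquiv E fun w =>
        iff_of_eq (congrArg Q (E.symm_apply_apply w).symm))
    have e2 : Nat.card {x : (Fin (n + 1) × ℤˣ) × ((Fin n → ℤˣ) × Equiv.Perm (Fin n)) //
            Q (E.symm x)}
        = Nat.card (Σ ps : Fin (n + 1) × ℤˣ,
            {y : (Fin n → ℤˣ) × Equiv.Perm (Fin n) // Q (E.symm (ps, y))}) :=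
      Nat.card_congr (Equiv.subtypeProdEquivSigmaSubtype
        (fun ps (y : (Fin n → ℤˣ) × Equiv.Perm (Fin n)) => Q (E.symm (ps, y))))
    rw [e1, e2, nat_card_sigma, Fintype.sum_prod_type]
  rw [key, Fin.sum_univ_succ]
  have fiber_zero : ∑ s : ℤˣ,
      Nat.card {y : (Fin n → ℤˣ) × Equiv.Perm (Fin n) // Q (E.symm ((0, s), y))}
        = N (-t) n := by
    rw [sum_units]
    have h1 : Nat.card {y : (Fin n → ℤˣ) × Equiv.Perm (Fin n) // Q (E.symm ((0, 1), y))} = 0 := by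
      have : IsEmpty {y : (Fin n → ℤˣ) × Equiv.Perm (Fin n) // Q (E.symm ((0, 1), y))} := by
        refine ⟨fun y => ?_⟩
        have hy := y.2
        rw [hE, hQ] at hy
        have := (P_zero 1 y.1.1 y.1.2).1 hy.1
        exact absurd this.1 (by decide)
      simp [this]
    have h2 : Nat.card {y : (Fin n → ℤˣ) × Equiv.Perm (Fin n) // Q (E.symm ((0, -1), y))}
        = N (-t) n := by
      rw [N]
      apply Nat.card_congr
      apply Equiv.subtypeEquivRight
      rintro ⟨η, σ⟩
      rw [hE, hQ]
      constructor
      · rintro ⟨hneg, hprod⟩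
        have h3 := (P_zero (-1) η σ).1 hneg
        refine ⟨h3.2, ?_⟩
        rw [prod_univ_cons] at hprod
        have : ((-1 : ℤˣ)) * ((-1 : ℤˣ) * ∏ j, η j) = -1 * t := by rw [hprod]
        simpa [← mul_assoc] using this
      · rintro ⟨hneg, hprod⟩
        refine ⟨(P_zero (-1) η σ).2 ⟨rfl, hneg⟩, ?_⟩
        rw [prod_univ_cons, hprod]
        simp
    rw [h1, h2, Nat.zero_add]
  have fiber_succ : ∀ q : Fin n, ∑ s : ℤˣ,
      Nat.card {y : (Fin n → ℤˣ) × Equiv.Perm (Fin n) // Q (E.symm ((q.succ, s), y))}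
        = 2 * N t n := by
    intro q
    have hf : ∀ s : ℤˣ,
        Nat.card {y : (Fin n → ℤˣ) × Equiv.Perm (Fin n) // Q (E.symm ((q.succ, s), y))}
          = N t n := by
      intro s
      rw [N]
      apply Nat.card_congr
      refine Equiv.subtypeEquiv ((twistEquiv q s).prodCongr (Equiv.refl _)) ?_
      rintro ⟨η, σ⟩
      rw [hE, hQ]
      refine and_congr (P_succ s η σ q) ?_
      show (∏ i, (Fin.cons s η : Fin (n + 1) → ℤˣ) i = t) ↔ (∏ j, twist q s η j = t)
      rw [prod_univ_cons, ← prod_univ_twist q s η]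
    rw [sum_units, hf 1, hf (-1)]
    ring
  rw [fiber_zero]
  have : ∑ q : Fin n, ∑ s : ℤˣ,
      Nat.card {y : (Fin n → ℤˣ) × Equiv.Perm (Fin n) // Q (E.symm ((q.succ, s), y))}
        = 2 * n * N t n := by
    rw [Finset.sum_congr rfl (fun q _ => fiber_succ q)]
    rw [Finset.sum_const, Finset.card_univ, Fintype.card_fin, smul_eq_mul]
    ring
  rw [this]

/-! ### double factorial facts -/

lemma dfac_step (k : ℕ) : (2 * k + 1)‼ = (2 * k + 1) * (2 * k - 1)‼ := by
  cases k with
  | zero => decide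
  | succ j =>
    have h1 : 2 * (j + 1) + 1 = (2 * j + 1) + 2 := by ring
    have h2 : 2 * (j + 1) - 1 = 2 * j + 1 := by omega
    rw [h1, h2, Nat.doubleFactorial_add_two]

lemma Dn (m : ℕ) : (m : ℚ) * ((2 * m - 1)‼ : ℕ) = m * (2 * m - 1 : ℚ) * ((2 * m - 3)‼ : ℕ) := by
  cases m with
  | zero => simp
  | succ k =>
    have h1 : 2 * (k + 1) - 1 = 2 * k + 1 := by omega
    have h3 : 2 * (k + 1) - 3 = 2 * k - 1 := by omega
    rw [h1, h3, dfac_step]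
    push_cast
    ring

lemma D1 (m : ℕ) : ((2 * m + 1)‼ : ℚ) = (2 * (m : ℚ) + 1) * ((2 * m - 1)‼ : ℕ) := by
  rw [dfac_step]
  push_cast
  ring

lemma N_formula (n : ℕ) :
    ((N (-1) n : ℚ) = n * ((2 * n - 3)‼ : ℕ)) ∧
      ((N 1 n : ℚ) = ((2 * n - 1)‼ : ℕ) - n * ((2 * n - 3)‼ : ℕ)) := by
  induction n with
  | zero =>
    constructor
    · rw [N_zero_neg]
      simp
    · rw [N_zero_pos]
      norm_num
  | succ m ih =>
    obtain ⟨ihB, ihC⟩ := ih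
    have hB : N (-1) (m + 1) = N 1 m + 2 * m * N (-1) m := by
      have := N_succ (-1) m
      simpa using this
    have hC : N 1 (m + 1) = N (-1) m + 2 * m * N 1 m := by
      have := N_succ 1 m
      simpa using this
    have h1 : 2 * (m + 1) - 1 = 2 * m + 1 := by omega
    have h3 : 2 * (m + 1) - 3 = 2 * m - 1 := by omega
    constructor
    · rw [hB, h3]
      push_cast [ihB, ihC]
      have := Dn m
      nlinarith [Dn m]
    · rw [hC, h1, h3, D1]
      push_cast [ihB, ihC]
      nlinarith [Dn m]

end NegAux

theorem stmt_6 (n : ℕ) (hn : 1 ≤ n) :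
    (Nat.card {w : (Fin n → ℤˣ) × Equiv.Perm (Fin n) //
          OnlyNegativeCycles w ∧ ∏ i : Fin n, w.1 i = -1} : ℚ)
        / (2 ^ (n - 1) * n.factorial)
      = (((2 * n - 1)‼ : ℚ) / (2 ^ n * n.factorial))
          * ((2 * (n : ℚ)) / (2 * (n : ℚ) - 1)) := by
  obtain ⟨m, rfl⟩ : ∃ m, n = m + 1 := ⟨n - 1, by omega⟩
  have hB := (NegAux.N_formula (m + 1)).1
  have h1 : 2 * (m + 1) - 1 = 2 * m + 1 := by omega
  have h3 : 2 * (m + 1) - 3 = 2 * m - 1 := by omega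
  have hcard : (Nat.card {w : (Fin (m + 1) → ℤˣ) × Equiv.Perm (Fin (m + 1)) //
      OnlyNegativeCycles w ∧ ∏ i : Fin (m + 1), w.1 i = -1} : ℚ)
        = (m + 1 : ℚ) * ((2 * m - 1)‼ : ℕ) := by
    rw [show (Nat.card {w : (Fin (m + 1) → ℤˣ) × Equiv.Perm (Fin (m + 1)) //
      OnlyNegativeCycles w ∧ ∏ i : Fin (m + 1), w.1 i = -1}) = NegAux.N (-1) (m + 1) from rfl]
    rw [hB, h3]
    push_cast
    ring
  rw [hcard, h1, NegAux.D1]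
  have hfac : ((m + 1).factorial : ℚ) ≠ 0 := by
    exact_mod_cast (Nat.factorial_pos (m + 1)).ne'
  have hpow : ((2 : ℚ) ^ m) ≠ 0 := by positivity
  have hodd : (2 * (m : ℚ) + 1) ≠ 0 := by positivity
  have hsub : 2 * ((m : ℚ) + 1) - 1 = 2 * m + 1 := by ring
  push_cast
  rw [hsub]
  field_simp
  ring
end

section
/- Let n ≥ 1. The number of pairs (ε, π), with ε : Fin n → {±1} a sign vector and π a permutation of Fin n, such that for every i ∈ Fin n the product of ε over the π-orbit of i equals +1 (i.e., (ε, π) has only positive cycles), is exactly (2n−1)!!. In particular, the number of elements of W(B_n) with only positive cycles equals the number of elements with only negative cycles. -/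
open Finset Nat

open Equiv Equiv.Perm Function

lemma mem_cycleOrbit_iff {n : ℕ} {π : Perm (Fin n)} {i j : Fin n} :
    j ∈ cycleOrbit π i ↔ π.SameCycle i j := by simp [cycleOrbit]

lemma self_mem_cycleOrbit {n : ℕ} (π : Perm (Fin n)) (i : Fin n) : i ∈ cycleOrbit π i :=
  mem_cycleOrbit_iff.2 (SameCycle.refl _ _)

lemma cycleOrbit_eq_of_sameCycle {n : ℕ} {π : Perm (Fin n)} {i j : Fin n}
    (h : π.SameCycle i j) : cycleOrbit π i = cycleOrbit π j := by
  ext k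
  simp only [mem_cycleOrbit_iff]
  exact ⟨fun hk => h.symm.trans hk, fun hk => h.trans hk⟩

lemma pow_mem_of_closed {n : ℕ} {π : Perm (Fin n)} {S : Finset (Fin n)}
    (hS : ∀ a ∈ S, π a ∈ S) (i : ℕ) : ∀ a ∈ S, (π ^ i) a ∈ S := by
  induction i with
  | zero => simp
  | succ k ih =>
      intro a ha
      rw [pow_succ, Perm.mul_apply]
      exact ih _ (hS a ha)

lemma sameCycle_mem_of_closed {n : ℕ} {π : Perm (Fin n)} {S : Finset (Fin n)}
    (hS : ∀ a ∈ S, π a ∈ S) {a b : Fin n} (h : π.SameCycle a b) (ha : a ∈ S) : b ∈ S := by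
  obtain ⟨i, -, rfl⟩ := h.exists_pow_eq'
  exact pow_mem_of_closed hS i a ha

/-- One application step: `succ w` and `succ (e w)` are in the same cycle of the composed perm. -/
lemma step_sameCycle {n : ℕ} (p : Fin (n + 1)) (e : Perm (Fin n)) (w : Fin n) :
    (Equiv.Perm.decomposeFin.symm (p, e)).SameCycle w.succ (e w).succ := by
  set π := Equiv.Perm.decomposeFin.symm (p, e) with hπ
  have h1 : π w.succ = Equiv.swap 0 p (e w).succ := Equiv.Perm.decomposeFin_symm_apply_succ e p w
  rcases eq_or_ne (e w).succ p with h | h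
  · have h2 : π w.succ = 0 := by rw [h1, h, Equiv.swap_apply_right]
    have h3 : π 0 = (e w).succ := by
      rw [hπ, Equiv.Perm.decomposeFin_symm_apply_zero]; exact h.symm
    have s1 : π.SameCycle w.succ 0 := by
      have := (SameCycle.refl π w.succ).apply_right; rwa [h2] at this
    have s2 : π.SameCycle 0 (e w).succ := by
      have := (SameCycle.refl π (0 : Fin (n+1))).apply_right; rwa [h3] at this
    exact s1.trans s2
  · have h2 : π w.succ = (e w).succ := by
      rw [h1, Equiv.swap_apply_of_ne_of_ne (Fin.succ_ne_zero _) h]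
    have := (SameCycle.refl π w.succ).apply_right; rwa [h2] at this

lemma sameCycle_succ_of_sameCycle {n : ℕ} {p : Fin (n + 1)} {e : Perm (Fin n)} {x y : Fin n}
    (h : e.SameCycle x y) :
    (Equiv.Perm.decomposeFin.symm (p, e)).SameCycle x.succ y.succ := by
  obtain ⟨i, -, rfl⟩ := h.exists_pow_eq'
  clear h
  induction i generalizing x with
  | zero => simpa using SameCycle.refl _ _
  | succ k ih =>
      rw [pow_succ, Perm.mul_apply]
      exact (step_sameCycle p e x).trans (ih (x := e x))
/-- `(ε, π)` has only positive cycles: the product of `ε` over every `π`-orbit is `+1`. -/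
def OnlyPositiveCycles {n : ℕ} (w : (Fin n → ℤˣ) × Equiv.Perm (Fin n)) : Prop :=
  ∀ i : Fin n, ∏ j ∈ cycleOrbit w.2 i, w.1 j = 1
-- Case p = 0
section CaseZero
variable {n : ℕ} (e : Equiv.Perm (Fin n))

lemma closedA (x : Fin n) :
    ∀ a ∈ (cycleOrbit e x).image Fin.succ,
      (Equiv.Perm.decomposeFin.symm ((0 : Fin (n+1)), e)) a ∈ (cycleOrbit e x).image Fin.succ := by
  intro a ha
  simp only [Finset.mem_image, mem_cycleOrbit_iff] at ha ⊢
  obtain ⟨z, hz, rfl⟩ := ha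
  refine ⟨e z, hz.apply_right, ?_⟩
  rw [Equiv.Perm.decomposeFin_symm_apply_succ, Equiv.swap_self, Equiv.refl_apply]

lemma sameCycleA_zero {z : Fin (n+1)}
    (h : (Equiv.Perm.decomposeFin.symm ((0 : Fin (n+1)), e)).SameCycle 0 z) : z = 0 := by
  have hS : ∀ a ∈ ({0} : Finset (Fin (n+1))),
      (Equiv.Perm.decomposeFin.symm ((0 : Fin (n+1)), e)) a ∈ ({0} : Finset (Fin (n+1))) := by
    intro a ha
    simp only [Finset.mem_singleton] at ha ⊢
    subst ha
    rw [Equiv.Perm.decomposeFin_symm_apply_zero]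
  simpa using sameCycle_mem_of_closed hS h (by simp)

lemma sameCycleA_succ {x y : Fin n} :
    (Equiv.Perm.decomposeFin.symm ((0 : Fin (n+1)), e)).SameCycle x.succ y.succ ↔
      e.SameCycle x y := by
  constructor
  · intro h
    have := sameCycle_mem_of_closed (closedA e x) h
      (by simp only [Finset.mem_image]; exact ⟨x, self_mem_cycleOrbit e x, rfl⟩)
    simp only [Finset.mem_image, mem_cycleOrbit_iff] at this
    obtain ⟨z, hz, hzy⟩ := this
    rwa [← Fin.succ_injective n hzy]
  · exact sameCycle_succ_of_sameCycle

lemma orbitA_zero : cycleOrbit (Equiv.Perm.decomposeFin.symm ((0 : Fin (n+1)), e)) 0 = {0} := by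
  ext k
  simp only [mem_cycleOrbit_iff, Finset.mem_singleton]
  exact ⟨fun h => sameCycleA_zero e h, fun h => by subst h; exact Equiv.Perm.SameCycle.refl _ _⟩

lemma orbitA_succ (x : Fin n) :
    cycleOrbit (Equiv.Perm.decomposeFin.symm ((0 : Fin (n+1)), e)) x.succ
      = (cycleOrbit e x).image Fin.succ := by
  ext k
  simp only [mem_cycleOrbit_iff, Finset.mem_image]
  constructor
  · intro h
    induction k using Fin.cases with
    | zero => exact absurd (sameCycleA_zero e h.symm) (Fin.succ_ne_zero x)
    | succ z => exact ⟨z, (sameCycleA_succ e).1 h, rfl⟩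
  · rintro ⟨z, hz, rfl⟩
    exact (sameCycleA_succ e).2 hz

end CaseZero
-- Case p = q.succ
section CaseSucc
variable {n : ℕ} (e : Equiv.Perm (Fin n)) (q : Fin n)

lemma applyB_succ (z : Fin n) :
    (Equiv.Perm.decomposeFin.symm (q.succ, e)) z.succ
      = if e z = q then 0 else (e z).succ := by
  rw [Equiv.Perm.decomposeFin_symm_apply_succ]
  rcases eq_or_ne (e z) q with h | h
  · rw [if_pos h, h, Equiv.swap_apply_right]
  · rw [if_neg h, Equiv.swap_apply_of_ne_of_ne (Fin.succ_ne_zero _)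
     (fun hc => h (Fin.succ_injective n hc))]

lemma closedB :
    ∀ a ∈ insert (0 : Fin (n+1)) ((cycleOrbit e q).image Fin.succ),
      (Equiv.Perm.decomposeFin.symm (q.succ, e)) a
        ∈ insert (0 : Fin (n+1)) ((cycleOrbit e q).image Fin.succ) := by
  intro a ha
  simp only [Finset.mem_insert, Finset.mem_image, mem_cycleOrbit_iff] at ha ⊢
  rcases ha with rfl | ⟨z, hz, rfl⟩
  · rw [Equiv.Perm.decomposeFin_symm_apply_zero]
    exact Or.inr ⟨q, Equiv.Perm.SameCycle.refl _ _, rfl⟩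
  · rw [applyB_succ]
    split_ifs with h
    · exact Or.inl rfl
    · exact Or.inr ⟨e z, hz.apply_right, rfl⟩

lemma closedB' (x : Fin n) (hx : ¬ e.SameCycle q x) :
    ∀ a ∈ (cycleOrbit e x).image Fin.succ,
      (Equiv.Perm.decomposeFin.symm (q.succ, e)) a ∈ (cycleOrbit e x).image Fin.succ := by
  intro a ha
  simp only [Finset.mem_image, mem_cycleOrbit_iff] at ha ⊢
  obtain ⟨z, hz, rfl⟩ := ha
  rw [applyB_succ]
  have hne : e z ≠ q := fun hc => hx (hc ▸ hz.apply_right.symm)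
  rw [if_neg hne]
  exact ⟨e z, hz.apply_right, rfl⟩

lemma sameCycleB_zero {x : Fin n} :
    (Equiv.Perm.decomposeFin.symm (q.succ, e)).SameCycle 0 x.succ ↔ e.SameCycle q x := by
  constructor
  · intro h
    have := sameCycle_mem_of_closed (closedB e q) h (by simp)
    simp only [Finset.mem_insert, Finset.mem_image, mem_cycleOrbit_iff] at this
    rcases this with h0 | ⟨z, hz, hzx⟩
    · exact absurd h0 (Fin.succ_ne_zero x)
    · rwa [← Fin.succ_injective n hzx]
  · intro h
    have s1 : (Equiv.Perm.decomposeFin.symm (q.succ, e)).SameCycle 0 q.succ := by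
      have := (Equiv.Perm.SameCycle.refl (Equiv.Perm.decomposeFin.symm (q.succ, e))
        (0 : Fin (n+1))).apply_right
      rwa [Equiv.Perm.decomposeFin_symm_apply_zero] at this
    exact s1.trans (sameCycle_succ_of_sameCycle h)

lemma sameCycleB_succ {x y : Fin n} :
    (Equiv.Perm.decomposeFin.symm (q.succ, e)).SameCycle x.succ y.succ ↔ e.SameCycle x y := by
  constructor
  · intro h
    by_cases hq : e.SameCycle q x
    · have hx' := (sameCycleB_zero e q).2 hq
      have hy' := hx'.trans h
      exact hq.symm.trans ((sameCycleB_zero e q).1 hy')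
    · have := sameCycle_mem_of_closed (closedB' e q x hq) h
        (by simp only [Finset.mem_image]; exact ⟨x, self_mem_cycleOrbit e x, rfl⟩)
      simp only [Finset.mem_image, mem_cycleOrbit_iff] at this
      obtain ⟨z, hz, hzy⟩ := this
      rwa [← Fin.succ_injective n hzy]
  · exact sameCycle_succ_of_sameCycle

lemma orbitB_zero :
    cycleOrbit (Equiv.Perm.decomposeFin.symm (q.succ, e)) 0
      = insert 0 ((cycleOrbit e q).image Fin.succ) := by
  ext k
  simp only [mem_cycleOrbit_iff, Finset.mem_insert, Finset.mem_image]
  induction k using Fin.cases with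
  | zero =>
      simp only [eq_self_iff_true, true_or, iff_true]
      exact Equiv.Perm.SameCycle.refl _ _
  | succ z =>
      rw [sameCycleB_zero]
      constructor
      · intro h; exact Or.inr ⟨z, h, rfl⟩
      · rintro (h0 | ⟨w, hw, hwz⟩)
        · exact absurd h0 (Fin.succ_ne_zero z)
        · rw [← Fin.succ_injective n hwz]; exact hw

lemma orbitB_succ (x : Fin n) (hx : ¬ e.SameCycle q x) :
    cycleOrbit (Equiv.Perm.decomposeFin.symm (q.succ, e)) x.succ
      = (cycleOrbit e x).image Fin.succ := by
  ext k
  simp only [mem_cycleOrbit_iff, Finset.mem_image]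
  induction k using Fin.cases with
  | zero =>
      constructor
      · intro h; exact absurd ((sameCycleB_zero e q).1 h.symm) hx
      · rintro ⟨w, hw, hwz⟩; exact absurd hwz (Fin.succ_ne_zero w)
  | succ z =>
      rw [sameCycleB_succ]
      constructor
      · intro h; exact ⟨z, h, rfl⟩
      · rintro ⟨w, hw, hwz⟩
        rw [← Fin.succ_injective n hwz]; exact hw

lemma orbitB_succ' (x : Fin n) (hx : e.SameCycle q x) :
    cycleOrbit (Equiv.Perm.decomposeFin.symm (q.succ, e)) x.succ
      = cycleOrbit (Equiv.Perm.decomposeFin.symm (q.succ, e)) 0 :=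
  (cycleOrbit_eq_of_sameCycle ((sameCycleB_zero e q).2 hx)).symm

end CaseSucc
section Pos

variable {n : ℕ} (e : Equiv.Perm (Fin n)) (ε : Fin n → ℤˣ)

lemma succ_injOn (s : Finset (Fin n)) :
    ∀ x ∈ s, ∀ y ∈ s, Fin.succ x = Fin.succ y → x = y :=
  fun x _ y _ h => Fin.succ_injective n h

lemma posA :
    OnlyPositiveCycles (Fin.cons 1 ε, Equiv.Perm.decomposeFin.symm ((0 : Fin (n+1)), e))
      ↔ OnlyPositiveCycles (ε, e) := by
  constructor
  · intro h x
    have hx := h x.succ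
    rw [orbitA_succ, Finset.prod_image (succ_injOn _)] at hx
    simpa [Fin.cons_succ] using hx
  · intro h i
    induction i using Fin.cases with
    | zero => rw [orbitA_zero]; simp
    | succ x =>
        rw [orbitA_succ, Finset.prod_image (succ_injOn _)]
        simpa [Fin.cons_succ] using h x

lemma prodB_zero (q : Fin n) (u : ℤˣ) :
    ∏ j ∈ cycleOrbit (Equiv.Perm.decomposeFin.symm (q.succ, e)) 0,
        (Fin.cons u (Function.update ε q (u * ε q))) j
      = ∏ j ∈ cycleOrbit e q, ε j := by
  rw [orbitB_zero, Finset.prod_insert (by simp [Fin.succ_ne_zero]),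
    Finset.prod_image (succ_injOn _), Fin.cons_zero]
  simp only [Fin.cons_succ]
  rw [Finset.prod_update_of_mem (self_mem_cycleOrbit e q), Finset.sdiff_singleton_eq_erase,
    ← Finset.mul_prod_erase _ ε (self_mem_cycleOrbit e q), ← mul_assoc, ← mul_assoc,
    Int.units_mul_self, one_mul]

lemma prodB_succ (q : Fin n) (u : ℤˣ) (x : Fin n) :
    ∏ j ∈ cycleOrbit (Equiv.Perm.decomposeFin.symm (q.succ, e)) x.succ,
        (Fin.cons u (Function.update ε q (u * ε q))) j
      = ∏ j ∈ cycleOrbit e x, ε j := by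
  by_cases hq : e.SameCycle q x
  · rw [orbitB_succ' e q x hq, prodB_zero, cycleOrbit_eq_of_sameCycle hq]
  · rw [orbitB_succ e q x hq, Finset.prod_image (succ_injOn _)]
    simp only [Fin.cons_succ]
    refine Finset.prod_congr rfl fun j hj => ?_
    refine Function.update_of_ne (fun hc => hq ?_) _ _
    subst hc
    exact (mem_cycleOrbit_iff.1 hj).symm

lemma posB (q : Fin n) (u : ℤˣ) :
    OnlyPositiveCycles (Fin.cons u (Function.update ε q (u * ε q)),
        Equiv.Perm.decomposeFin.symm (q.succ, e))
      ↔ OnlyPositiveCycles (ε, e) := by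
  constructor
  · intro h x
    have hx := h x.succ
    rwa [prodB_succ] at hx
  · intro h i
    induction i using Fin.cases with
    | zero => rw [show ((Fin.cons u (Function.update ε q (u * ε q)),
          Equiv.Perm.decomposeFin.symm (q.succ, e)) :
          (Fin (n+1) → ℤˣ) × Equiv.Perm (Fin (n+1))).1
          = Fin.cons u (Function.update ε q (u * ε q)) from rfl, prodB_zero]; exact h q
    | succ x => rw [show ((Fin.cons u (Function.update ε q (u * ε q)),
          Equiv.Perm.decomposeFin.symm (q.succ, e)) :
          (Fin (n+1) → ℤˣ) × Equiv.Perm (Fin (n+1))).1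
          = Fin.cons u (Function.update ε q (u * ε q)) from rfl, prodB_succ]; exact h x

end Pos
section Bij

variable {n : ℕ}

/-- Build a signed permutation on `n+1` points from extra data and one on `n` points. -/
def phi : Option (Fin n × ℤˣ) × ((Fin n → ℤˣ) × Equiv.Perm (Fin n)) →
    (Fin (n+1) → ℤˣ) × Equiv.Perm (Fin (n+1))
  | (none, (ε, e)) => (Fin.cons 1 ε, Equiv.Perm.decomposeFin.symm (0, e))
  | (some (q, u), (ε, e)) =>
      (Fin.cons u (Function.update ε q (u * ε q)), Equiv.Perm.decomposeFin.symm (q.succ, e))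

/-- Inverse of `phi`. -/
def psi (w : (Fin (n+1) → ℤˣ) × Equiv.Perm (Fin (n+1))) :
    Option (Fin n × ℤˣ) × ((Fin n → ℤˣ) × Equiv.Perm (Fin n)) :=
  Fin.cases (motive := fun _ => Option (Fin n × ℤˣ) × ((Fin n → ℤˣ) × Equiv.Perm (Fin n)))
    (none, (w.1 ∘ Fin.succ, (Equiv.Perm.decomposeFin w.2).2))
    (fun q => (some (q, w.1 0),
      (Function.update (w.1 ∘ Fin.succ) q (w.1 0 * w.1 q.succ),
        (Equiv.Perm.decomposeFin w.2).2)))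
    (Equiv.Perm.decomposeFin w.2).1

lemma psi_phi (z : Option (Fin n × ℤˣ) × ((Fin n → ℤˣ) × Equiv.Perm (Fin n))) :
    psi (phi z) = z := by
  obtain ⟨o, ε, e⟩ := z
  cases o with
  | none =>
      simp only [phi, psi, Equiv.apply_symm_apply, Fin.cases_zero]
      refine Prod.ext rfl (Prod.ext ?_ rfl)
      funext j
      simp [Fin.cons_succ]
  | some qu =>
      obtain ⟨q, u⟩ := qu
      simp only [phi, psi, Equiv.apply_symm_apply, Fin.cases_succ]
      refine Prod.ext ?_ (Prod.ext ?_ rfl)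
      · simp [Fin.cons_zero]
      · funext j
        simp only
        have hc : (Fin.cons u (Function.update ε q (u * ε q)) ∘ Fin.succ : Fin n → ℤˣ)
            = Function.update ε q (u * ε q) := by
          funext i
          simp only [Function.comp_apply, Fin.cons_succ]
        rw [hc]
        simp only [Fin.cons_zero, Fin.cons_succ, Function.update_self]
        rw [← mul_assoc, Int.units_mul_self, one_mul, Function.update_idem,
          Function.update_eq_self]

lemma phi_psi (w : (Fin (n+1) → ℤˣ) × Equiv.Perm (Fin (n+1)))
    (hw : OnlyPositiveCycles w) : phi (psi w) = w := by
  obtain ⟨ε, π⟩ := w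
  obtain ⟨p, e, hpe⟩ : ∃ p e, Equiv.Perm.decomposeFin π = (p, e) :=
    ⟨_, _, rfl⟩
  have hπ : π = Equiv.Perm.decomposeFin.symm (p, e) := by
    rw [← hpe, Equiv.symm_apply_apply]
  induction p using Fin.cases with
  | zero =>
      simp only [psi, hpe, Fin.cases_zero, phi]
      refine Prod.ext ?_ hπ.symm
      simp only
      funext j
      induction j using Fin.cases with
      | zero =>
          rw [Fin.cons_zero]
          have h0 := hw 0
          rw [show ((ε, π) : (Fin (n+1) → ℤˣ) × Equiv.Perm (Fin (n+1))).2 = π from rfl,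
            hπ, orbitA_zero] at h0
          simpa using h0.symm
      | succ x => simp [Fin.cons_succ]
  | succ q =>
      simp only [psi, hpe, Fin.cases_succ, phi]
      refine Prod.ext ?_ hπ.symm
      simp only
      funext j
      induction j using Fin.cases with
      | zero => rw [Fin.cons_zero]
      | succ x =>
          rw [Fin.cons_succ]
          by_cases hx : x = q
          · subst hx
            simp only [Function.update_self, Function.comp_apply]
            rw [← mul_assoc, Int.units_mul_self, one_mul]
          · rw [Function.update_of_ne hx, Function.update_of_ne hx]
            rfl

lemma pos_phi (z : Option (Fin n × ℤˣ) × ((Fin n → ℤˣ) × Equiv.Perm (Fin n))) :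
    OnlyPositiveCycles (phi z) ↔ OnlyPositiveCycles z.2 := by
  obtain ⟨o, ε, e⟩ := z
  cases o with
  | none => exact posA e ε
  | some qu => obtain ⟨q, u⟩ := qu; exact posB e ε q u

/-- The recursion equivalence. -/
def posEquiv :
    (Option (Fin n × ℤˣ)) × {w : (Fin n → ℤˣ) × Equiv.Perm (Fin n) // OnlyPositiveCycles w}
      ≃ {w : (Fin (n+1) → ℤˣ) × Equiv.Perm (Fin (n+1)) // OnlyPositiveCycles w} where
  toFun z := ⟨phi (z.1, z.2.1), (pos_phi (z.1, z.2.1)).2 z.2.2⟩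
  invFun w := ((psi w.1).1, ⟨(psi w.1).2, by
    have h2 := (pos_phi ((psi w.1).1, (psi w.1).2)).1
    rw [show (((psi w.1).1, (psi w.1).2) :
        Option (Fin n × ℤˣ) × ((Fin n → ℤˣ) × Equiv.Perm (Fin n))) = psi w.1 from rfl,
      phi_psi w.1 w.2] at h2
    exact h2 w.2⟩)
  left_inv z := by
    have h := psi_phi (z.1, z.2.1)
    ext <;> simp_all [Prod.ext_iff]
  right_inv w := by
    have h := phi_psi w.1 w.2
    apply Subtype.ext
    simpa using h

end Bij
section Count

lemma card_pos_succ (n : ℕ) :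
    Nat.card {w : (Fin (n+1) → ℤˣ) × Equiv.Perm (Fin (n+1)) // OnlyPositiveCycles w}
      = (2 * n + 1) * Nat.card {w : (Fin n → ℤˣ) × Equiv.Perm (Fin n) // OnlyPositiveCycles w} := by
  rw [← Nat.card_congr (posEquiv (n := n)), Nat.card_prod]
  congr 1
  rw [Nat.card_eq_fintype_card]
  simp [Fintype.card_option, Fintype.card_prod, Fintype.card_units_int]
  ring

lemma card_pos (n : ℕ) :
    Nat.card {w : (Fin n → ℤˣ) × Equiv.Perm (Fin n) // OnlyPositiveCycles w}
      = (2 * n - 1)‼ := by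
  induction n with
  | zero =>
      have h1 : (2 * 0 - 1)‼ = 1 := rfl
      rw [h1, Nat.card_eq_one_iff_unique]
      constructor
      · constructor
        intro a b
        apply Subtype.ext
        apply Prod.ext
        · funext i; exact i.elim0
        · apply Equiv.ext; intro i; exact i.elim0
      · exact ⟨⟨(fun _ => 1, 1), fun i => i.elim0⟩⟩
  | succ m ih =>
      rw [card_pos_succ, ih]
      cases m with
      | zero => rfl
      | succ k =>
          rw [show 2 * (k + 1 + 1) - 1 = (2 * (k + 1) - 1) + 2 by omega,
            Nat.doubleFactorial_add_two,
            show 2 * (k + 1) - 1 + 2 = 2 * (k + 1) + 1 by omega]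

end Count

section Neg

variable {n : ℕ}

lemma min'_congr {s t : Finset (Fin n)} (h : s = t) (hs : s.Nonempty) (ht : t.Nonempty) :
    s.min' hs = t.min' ht := by subst h; rfl

/-- Flip the sign at the minimum of each cycle. -/
def flipSign (π : Equiv.Perm (Fin n)) (ε : Fin n → ℤˣ) (i : Fin n) : ℤˣ :=
  if i = (cycleOrbit π i).min' ⟨i, self_mem_cycleOrbit π i⟩ then -ε i else ε i

lemma flipSign_eq (π : Equiv.Perm (Fin n)) (ε : Fin n → ℤˣ) {i j : Fin n}
    (hj : j ∈ cycleOrbit π i) :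
    flipSign π ε j
      = if j = (cycleOrbit π i).min' ⟨i, self_mem_cycleOrbit π i⟩ then -ε j else ε j := by
  unfold flipSign
  rw [min'_congr (cycleOrbit_eq_of_sameCycle (mem_cycleOrbit_iff.1 hj).symm)
    ⟨j, self_mem_cycleOrbit π j⟩ ⟨i, self_mem_cycleOrbit π i⟩]

lemma prod_flipSign (π : Equiv.Perm (Fin n)) (ε : Fin n → ℤˣ) (i : Fin n) :
    ∏ j ∈ cycleOrbit π i, flipSign π ε j = -∏ j ∈ cycleOrbit π i, ε j := by
  set C := cycleOrbit π i with hC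
  have hne : C.Nonempty := ⟨i, self_mem_cycleOrbit π i⟩
  set m := C.min' hne with hm
  have hmem : m ∈ C := C.min'_mem hne
  rw [Finset.prod_congr rfl (fun j hj => flipSign_eq π ε hj),
    ← Finset.mul_prod_erase _ _ hmem, ← Finset.mul_prod_erase _ ε hmem,
    if_pos rfl]
  rw [Finset.prod_congr rfl (fun j hj => if_neg (Finset.ne_of_mem_erase hj)), neg_mul]

lemma flipSign_flipSign (π : Equiv.Perm (Fin n)) (ε : Fin n → ℤˣ) :
    flipSign π (flipSign π ε) = ε := by
  funext i
  unfold flipSign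
  by_cases h : i = (cycleOrbit π i).min' ⟨i, self_mem_cycleOrbit π i⟩
  · rw [if_pos h, if_pos h, neg_neg]
  · rw [if_neg h, if_neg h]

/-- Flipping signs gives a bijection between positive and negative elements. -/
def negEquiv :
    {w : (Fin n → ℤˣ) × Equiv.Perm (Fin n) // OnlyPositiveCycles w}
      ≃ {w : (Fin n → ℤˣ) × Equiv.Perm (Fin n) // OnlyNegativeCycles w} where
  toFun w := ⟨(flipSign w.1.2 w.1.1, w.1.2), fun i => by
    rw [show ((flipSign w.1.2 w.1.1, w.1.2) :
        (Fin n → ℤˣ) × Equiv.Perm (Fin n)).2 = w.1.2 from rfl, prod_flipSign, w.2 i]⟩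
  invFun w := ⟨(flipSign w.1.2 w.1.1, w.1.2), fun i => by
    rw [show ((flipSign w.1.2 w.1.1, w.1.2) :
        (Fin n → ℤˣ) × Equiv.Perm (Fin n)).2 = w.1.2 from rfl, prod_flipSign, w.2 i, neg_neg]⟩
  left_inv w := by
    apply Subtype.ext
    apply Prod.ext
    · exact flipSign_flipSign _ _
    · rfl
  right_inv w := by
    apply Subtype.ext
    apply Prod.ext
    · exact flipSign_flipSign _ _
    · rfl

end Neg

theorem stmt_7 (n : ℕ) (hn : 1 ≤ n) :
    Nat.card {w : (Fin n → ℤˣ) × Equiv.Perm (Fin n) // OnlyPositiveCycles w}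
      = (2 * n - 1)‼ ∧
    Nat.card {w : (Fin n → ℤˣ) × Equiv.Perm (Fin n) // OnlyPositiveCycles w}
      = Nat.card {w : (Fin n → ℤˣ) × Equiv.Perm (Fin n) // OnlyNegativeCycles w} := by
  exact ⟨card_pos n, Nat.card_congr negEquiv⟩
end

section
/- For every integer n ≥ 1, the real number p(n) = (2n−1)!!/(2^n · n!) satisfies p(n) < h(n), where h(n) = (1 + 1/(22n))/√(π·n). -/
/-!
With `W n` the `n`-th partial Wallis product, `W n = 2^(4n) (n!)^4 / ((2n)!^2 (2n+1))` gives
`p(n)^2 = 1 / ((2n+1) W n)`, and Wallis' lower bound `W n ≥ (2n+1)/(2n+2) · π/2` then yields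
`π n p(n)^2 ≤ 4n(n+1)/(2n+1)^2 < 1`, so already `p(n) < 1/√(πn)`.
-/

open Nat Real

theorem Nat.doubleFactorial_two_mul_sub_one_mul (n : ℕ) :
    (2 * n - 1)‼ * (2 ^ n * n !) = (2 * n)! := by
  rcases n with _ | n
  · rfl
  · have h := factorial_eq_mul_doubleFactorial (2 * n + 1)
    rw [show 2 * n + 1 + 1 = 2 * (n + 1) by ring, doubleFactorial_two_mul] at h
    rw [h, show 2 * (n + 1) - 1 = 2 * n + 1 by omega, mul_comm]

namespace Real.Wallis

theorem sq_doubleFactorial_div_eq (n : ℕ) :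
    ((2 * n - 1)‼ / (2 ^ n * n ! : ℝ)) ^ 2 = 1 / ((2 * n + 1) * W n) := by
  have hcast : ((2 * n - 1)‼ : ℝ) = (2 * n)! / (2 ^ n * n !) := by
    rw [eq_div_iff (by positivity)]
    exact_mod_cast doubleFactorial_two_mul_sub_one_mul n
  rw [W_eq_factorial_ratio, hcast]
  field_simp
  ring

theorem pi_mul_mul_sq_doubleFactorial_div_lt_one {n : ℕ} (hn : 1 ≤ n) :
    π * n * ((2 * n - 1)‼ / (2 ^ n * n ! : ℝ)) ^ 2 < 1 := by
  have hn' : (1 : ℝ) ≤ n := by exact_mod_cast hn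
  have hW : (2 * n + 1) / (2 * n + 2) * (π / 2) ≤ W n := le_W n
  rw [sq_doubleFactorial_div_eq, mul_one_div, div_lt_one (by have := W_pos n; positivity)]
  rw [div_mul_eq_mul_div, div_le_iff₀ (by positivity)] at hW
  nlinarith [pi_pos]

end Real.Wallis

theorem doubleFactorial_div_lt_inv_sqrt {n : ℕ} (hn : 1 ≤ n) :
    ((2 * n - 1)‼ : ℝ) / (2 ^ n * n !) < 1 / √(π * n) := by
  have hpin : 0 < π * n := by positivity
  rw [one_div, ← sqrt_inv, lt_sqrt (by positivity), ← one_div, lt_div_iff₀ hpin, mul_comm]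
  exact Wallis.pi_mul_mul_sq_doubleFactorial_div_lt_one hn

theorem stmt_11 (n : ℕ) (hn : 1 ≤ n) :
    ((2 * n - 1)‼ : ℝ) / (2 ^ n * n.factorial)
      < (1 + 1 / (22 * (n : ℝ))) / Real.sqrt (Real.pi * n) := by
  calc ((2 * n - 1)‼ : ℝ) / (2 ^ n * n !) < 1 / √(π * n) := doubleFactorial_div_lt_inv_sqrt hn
    _ ≤ (1 + 1 / (22 * (n : ℝ))) / √(π * n) := by gcongr; simp
end

section
/- With p(n) = (2n−1)!!/(2^n · n!) and h(n) = (1 + 1/(22n))/√(π·n) as real numbers, the sequence p(n)/h(n) tends to 1 as n → ∞. Equivalently, √(π·n) · (2n−1)!!/(2^n · n!) tends to 1 as n → ∞. -/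
open Nat Real Filter

/-!
Since `(2n)! = 2ⁿ n! (2n-1)‼`, the quantity `(2n-1)‼ / (2ⁿ n!)` equals `(2n)! / (2ⁿ n!)²`, and in
terms of the Stirling sequence `s n = n! / (√(2n) (n/e)ⁿ)` one gets
`√(πn) (2n)! / (2ⁿ n!)² = √π s(2n) / s(n)²`, which tends to `√π √π / √π² = 1` by Stirling's
formula `s n → √π`. The correction factor `1 + 1/(22n)` tends to `1` and does not affect the limit.
-/

theorem factorial_two_mul_eq_mul_doubleFactorial (n : ℕ) :
    (2 * n)! = 2 ^ n * n ! * (2 * n - 1)‼ := by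
  cases n with
  | zero => rfl
  | succ m =>
    rw [show 2 * (m + 1) - 1 = 2 * m + 1 by omega, show 2 * (m + 1) = 2 * m + 1 + 1 by omega,
      factorial_eq_mul_doubleFactorial, ← doubleFactorial_two_mul,
      show 2 * m + 1 + 1 = 2 * (m + 1) by omega]

theorem doubleFactorial_two_mul_sub_one_div (n : ℕ) :
    ((2 * n - 1)‼ : ℝ) / (2 ^ n * n !) = (2 * n)! / (2 ^ n * n !) ^ 2 := by
  rw [factorial_two_mul_eq_mul_doubleFactorial]
  push_cast
  field_simp

theorem sqrt_pi_mul_factorial_two_mul_div_eq_stirlingSeq {n : ℕ} (hn : n ≠ 0) :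
    √(π * n) * ((2 * n)! / (2 ^ n * n !) ^ 2 : ℝ) =
      √π * Stirling.stirlingSeq (2 * n) / Stirling.stirlingSeq n ^ 2 := by
  have hsqrt : √(2 * (2 * n : ℕ) : ℝ) = 2 * √(n : ℝ) := by
    rw [show (2 * (2 * n : ℕ) : ℝ) = 2 ^ 2 * n by push_cast; ring, sqrt_mul (by positivity),
      sqrt_sq zero_le_two]
  simp only [Stirling.stirlingSeq, hsqrt, div_pow, mul_pow, sqrt_mul pi_pos.le,
    sq_sqrt (by positivity : (0:ℝ) ≤ 2 * n)]
  push_cast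
  field_simp
  rw [sq_sqrt n.cast_nonneg]
  ring

theorem tendsto_sqrt_pi_mul_doubleFactorial_div :
    Tendsto (fun n : ℕ => √(π * n) * ((2 * n - 1)‼ / (2 ^ n * n !) : ℝ)) atTop (nhds 1) := by
  have hsqrt_pi : √π ≠ 0 := (sqrt_pos.mpr pi_pos).ne'
  have hstirling := Stirling.tendsto_stirlingSeq_sqrt_pi
  have hstirling_two_mul : Tendsto (fun n : ℕ => Stirling.stirlingSeq (2 * n)) atTop (nhds √π) :=
    hstirling.comp (tendsto_id.const_mul_atTop' two_pos)
  have hlim := (hstirling_two_mul.const_mul √π).div (hstirling.pow 2) (pow_ne_zero 2 hsqrt_pi)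
  rw [← sq, div_self (pow_ne_zero 2 hsqrt_pi)] at hlim
  refine hlim.congr' (eventually_ne_atTop 0 |>.mono fun n hn => ?_)
  simp only [Pi.div_apply]
  rw [doubleFactorial_two_mul_sub_one_div, sqrt_pi_mul_factorial_two_mul_div_eq_stirlingSeq hn]

theorem stmt_12 :
    Filter.Tendsto
      (fun n : ℕ =>
        (((2 * n - 1)‼ : ℝ) / (2 ^ n * n.factorial))
          / ((1 + 1 / (22 * (n : ℝ))) / Real.sqrt (Real.pi * n)))
      Filter.atTop (nhds 1) ∧
    Filter.Tendsto
      (fun n : ℕ =>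
        Real.sqrt (Real.pi * n) * (((2 * n - 1)‼ : ℝ) / (2 ^ n * n.factorial)))
      Filter.atTop (nhds 1) := by
  have hcorrection : Tendsto (fun n : ℕ => 1 + 1 / (22 * (n : ℝ))) atTop (nhds 1) := by
    simpa [mul_comm] using (tendsto_one_div_atTop_nhds_zero_nat.const_mul (22 : ℝ)⁻¹).const_add 1
  refine ⟨?_, tendsto_sqrt_pi_mul_doubleFactorial_div⟩
  have hquotient := tendsto_sqrt_pi_mul_doubleFactorial_div.div hcorrection one_ne_zero
  rw [div_one] at hquotient
  refine hquotient.congr fun n => ?_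
  simp only [Pi.div_apply]
  rw [div_div_eq_mul_div, mul_comm]
end
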